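/- arXiv:2504.07764 — 8 statements merged into one kernel-verified Lean document; each statement's English description precedes it below -/
import Mathlib

section
/- Let k ≥ 4 and let F'_1 be the graph with vertex set {u, v, w, v₁, v₂, w₁, w₂} and edges uv₁, uv₂, v₁v, v₂v, uw₁, uw₂, w₁w, w₂w, v₁v₂, w₁w₂. Let F₁ be obtained from F'_1 by adding k−3 new vertices y₄,…,y_k, each adjacent to every vertex of F'_1 except u. Let f be a function assigning colors in [k] to u, v, w, y₄,…,y_k with f(y_i) = i for 4 ≤ i ≤ k. Then f extends to a proper k-coloring of F₁ if and only if either (a) f(u) ∈ {4,…,k} and f(v), f(w) ∈ {1,2,3}, or (b) f(u) = f(v) = f(w) ∈ {1,2,3}. -/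
/-- `c` is a proper `k`-coloring of `G` with colors in `[k] = {1,…,k}`. -/
def IsProperKColoring {V : Type*} (G : SimpleGraph V) (k : ℕ) (c : V → ℕ) : Prop :=
  (∀ v, c v ∈ Finset.Icc 1 k) ∧ ∀ ⦃x y⦄, G.Adj x y → c x ≠ c y

/-- Index type for the vertices `y₄, …, y_k`. -/
def Yk (k : ℕ) : Type := {i : ℕ // 4 ≤ i ∧ i ≤ k}

/-- Vertices of the gadget `F₁`: `u = 0`, `v = 1`, `w = 2`, `v₁ = 3`, `v₂ = 4`,
`w₁ = 5`, `w₂ = 6`, plus the vertices `y₄, …, y_k`. -/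
def rel1 (k : ℕ) : (Fin 7 ⊕ Yk k) → (Fin 7 ⊕ Yk k) → Prop
  | .inl a, .inl b =>
      (a, b) ∈ ([(0,3),(0,4),(3,1),(4,1),(0,5),(0,6),(5,2),(6,2),(3,4),(5,6)] :
        List (Fin 7 × Fin 7))
  | .inl a, .inr _ => a ≠ 0
  | _, _ => False

/-- The gadget `F₁`: `F'₁` (edges `uvᵢ, vᵢv, uwᵢ, wᵢw` for `i = 1,2`, `v₁v₂`,
`w₁w₂`) together with `y₄, …, y_k`, each adjacent to all vertices but `u`. -/
def F1 (k : ℕ) : SimpleGraph (Fin 7 ⊕ Yk k) := SimpleGraph.fromRel (rel1 k)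

/-- First alternative color. -/
def pc (x : ℕ) : ℕ := if x = 1 then 2 else 1
/-- Second alternative color. -/
def qc (x : ℕ) : ℕ := if x = 3 then 2 else 3

lemma pq_facts {x : ℕ} (hx : x = 1 ∨ x = 2 ∨ x = 3) :
    (pc x = 1 ∨ pc x = 2) ∧ (qc x = 2 ∨ qc x = 3) ∧ pc x ≠ x ∧ qc x ≠ x ∧ pc x ≠ qc x := by
  rcases hx with rfl | rfl | rfl <;> simp [pc, qc]

/-- The coloring used in the backward direction. -/
def gvec (x y z : ℕ) (i : Fin 7) : ℕ :=
  if i.val = 0 then x else if i.val = 1 then y else if i.val = 2 then z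
  else if i.val = 3 then pc y else if i.val = 4 then qc y
  else if i.val = 5 then pc z else qc z

/-- A function `f` on `{u, v, w, y₄, …, y_k}` with `f(yᵢ) = i` extends to a proper
`k`-coloring of `F₁` iff `f u ∈ {4,…,k}` and `f v, f w ∈ {1,2,3}`, or
`f u = f v = f w ∈ {1,2,3}`. -/
theorem F1_extension (k : ℕ) (hk : 4 ≤ k) (f : (Fin 7 ⊕ Yk k) → ℕ)
    (hfu : f (.inl 0) ∈ Finset.Icc 1 k) (hfv : f (.inl 1) ∈ Finset.Icc 1 k)
    (hfw : f (.inl 2) ∈ Finset.Icc 1 k)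
    (hfy : ∀ y : Yk k, f (.inr y) = y.1) :
    (∃ c : (Fin 7 ⊕ Yk k) → ℕ, IsProperKColoring (F1 k) k c ∧
        c (.inl 0) = f (.inl 0) ∧ c (.inl 1) = f (.inl 1) ∧ c (.inl 2) = f (.inl 2) ∧
        ∀ y : Yk k, c (.inr y) = f (.inr y)) ↔
      ((f (.inl 0) ∈ Finset.Icc 4 k ∧ f (.inl 1) ∈ ({1,2,3} : Set ℕ) ∧
          f (.inl 2) ∈ ({1,2,3} : Set ℕ)) ∨
        (f (.inl 0) = f (.inl 1) ∧ f (.inl 1) = f (.inl 2) ∧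
          f (.inl 0) ∈ ({1,2,3} : Set ℕ))) := by
  simp only [Finset.mem_Icc] at hfu hfv hfw
  constructor
  · rintro ⟨c, ⟨hrange, hadj⟩, hc0, hc1, hc2, hcy⟩
    -- each vertex other than u gets a color ≤ 3
    have small : ∀ t : Fin 7, t ≠ 0 → c (.inl t) ≤ 3 := by
      intro t ht
      by_contra hgt
      push_neg at hgt
      have hmem := hrange (.inl t)
      rw [Finset.mem_Icc] at hmem
      have hy : 4 ≤ c (.inl t) ∧ c (.inl t) ≤ k := by omega
      have hA : (F1 k).Adj (.inl t) (.inr ⟨c (.inl t), hy⟩) :=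
        (SimpleGraph.fromRel_adj _ _ _).mpr ⟨by simp, Or.inl ht⟩
      have hne := hadj hA
      have : c (.inr ⟨c (.inl t), hy⟩) = c (.inl t) :=
        ((hcy ⟨c (.inl t), hy⟩).trans (hfy ⟨c (.inl t), hy⟩))
      exact hne this.symm
    have E : ∀ a b : Fin 7, rel1 k (.inl a) (.inl b) → a ≠ b → c (.inl a) ≠ c (.inl b) := by
      intro a b h hne
      exact hadj ((SimpleGraph.fromRel_adj _ _ _).mpr
        ⟨fun hh => hne (Sum.inl.inj hh), Or.inl h⟩)
    have e03 := E 0 3 (by simp [rel1]) (by decide)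
    have e04 := E 0 4 (by simp [rel1]) (by decide)
    have e31 := E 3 1 (by simp [rel1]) (by decide)
    have e41 := E 4 1 (by simp [rel1]) (by decide)
    have e05 := E 0 5 (by simp [rel1]) (by decide)
    have e06 := E 0 6 (by simp [rel1]) (by decide)
    have e52 := E 5 2 (by simp [rel1]) (by decide)
    have e62 := E 6 2 (by simp [rel1]) (by decide)
    have e34 := E 3 4 (by simp [rel1]) (by decide)
    have e56 := E 5 6 (by simp [rel1]) (by decide)
    have s1 := small 1 (by decide)
    have s2 := small 2 (by decide)
    have s3 := small 3 (by decide)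
    have s4 := small 4 (by decide)
    have s5 := small 5 (by decide)
    have s6 := small 6 (by decide)
    have m0 := hrange (.inl 0); have m1 := hrange (.inl 1); have m2 := hrange (.inl 2)
    have m3 := hrange (.inl 3); have m4 := hrange (.inl 4)
    have m5 := hrange (.inl 5); have m6 := hrange (.inl 6)
    rw [Finset.mem_Icc] at m0 m1 m2 m3 m4 m5 m6
    simp only [Finset.mem_Icc, Set.mem_insert_iff, Set.mem_singleton_iff]
    omega
  · intro h
    obtain ⟨hv, hw, hu⟩ :
        (f (.inl 1) = 1 ∨ f (.inl 1) = 2 ∨ f (.inl 1) = 3) ∧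
        (f (.inl 2) = 1 ∨ f (.inl 2) = 2 ∨ f (.inl 2) = 3) ∧
        ((4 ≤ f (.inl 0) ∧ f (.inl 0) ≤ k) ∨
          (f (.inl 0) = f (.inl 1) ∧ f (.inl 0) = f (.inl 2))) := by
      simp only [Finset.mem_Icc, Set.mem_insert_iff, Set.mem_singleton_iff] at h
      omega
    obtain ⟨P11, P12, P13, P14, P15⟩ := pq_facts hv
    obtain ⟨P21, P22, P23, P24, P25⟩ := pq_facts hw
    refine ⟨Sum.elim (gvec (f (.inl 0)) (f (.inl 1)) (f (.inl 2))) (fun y => y.1),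
      ⟨?_, ?_⟩, rfl, rfl, rfl, fun y => (hfy y).symm⟩
    · rintro (i | y)
      · fin_cases i
        · exact Finset.mem_Icc.mpr (show 1 ≤ f (.inl 0) ∧ f (.inl 0) ≤ k by omega)
        · exact Finset.mem_Icc.mpr (show 1 ≤ f (.inl 1) ∧ f (.inl 1) ≤ k by omega)
        · exact Finset.mem_Icc.mpr (show 1 ≤ f (.inl 2) ∧ f (.inl 2) ≤ k by omega)
        · exact Finset.mem_Icc.mpr
            (show 1 ≤ pc (f (.inl 1)) ∧ pc (f (.inl 1)) ≤ k by omega)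
        · exact Finset.mem_Icc.mpr
            (show 1 ≤ qc (f (.inl 1)) ∧ qc (f (.inl 1)) ≤ k by omega)
        · exact Finset.mem_Icc.mpr
            (show 1 ≤ pc (f (.inl 2)) ∧ pc (f (.inl 2)) ≤ k by omega)
        · exact Finset.mem_Icc.mpr
            (show 1 ≤ qc (f (.inl 2)) ∧ qc (f (.inl 2)) ≤ k by omega)
      · exact Finset.mem_Icc.mpr (show 1 ≤ y.1 ∧ y.1 ≤ k by have := y.2; omega)
    · have main : ∀ x y, rel1 k x y →
          Sum.elim (gvec (f (.inl 0)) (f (.inl 1)) (f (.inl 2))) (fun y => y.1) x ≠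
          Sum.elim (gvec (f (.inl 0)) (f (.inl 1)) (f (.inl 2))) (fun y => y.1) y := by
        rintro (a | a) (b | b) h
        · simp only [rel1, List.mem_cons, List.not_mem_nil, or_false, Prod.mk.injEq] at h
          rcases h with ⟨rfl, rfl⟩ | ⟨rfl, rfl⟩ | ⟨rfl, rfl⟩ | ⟨rfl, rfl⟩ | ⟨rfl, rfl⟩ |
            ⟨rfl, rfl⟩ | ⟨rfl, rfl⟩ | ⟨rfl, rfl⟩ | ⟨rfl, rfl⟩ | ⟨rfl, rfl⟩
          · exact show f (.inl 0) ≠ pc (f (.inl 1)) by omega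
          · exact show f (.inl 0) ≠ qc (f (.inl 1)) by omega
          · exact show pc (f (.inl 1)) ≠ f (.inl 1) by omega
          · exact show qc (f (.inl 1)) ≠ f (.inl 1) by omega
          · exact show f (.inl 0) ≠ pc (f (.inl 2)) by omega
          · exact show f (.inl 0) ≠ qc (f (.inl 2)) by omega
          · exact show pc (f (.inl 2)) ≠ f (.inl 2) by omega
          · exact show qc (f (.inl 2)) ≠ f (.inl 2) by omega
          · exact show pc (f (.inl 1)) ≠ qc (f (.inl 1)) by omega
          · exact show pc (f (.inl 2)) ≠ qc (f (.inl 2)) by omega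
        · have hb := b.2
          fin_cases a
          · exact absurd rfl h
          · exact show f (.inl 1) ≠ b.1 by omega
          · exact show f (.inl 2) ≠ b.1 by omega
          · exact show pc (f (.inl 1)) ≠ b.1 by omega
          · exact show qc (f (.inl 1)) ≠ b.1 by omega
          · exact show pc (f (.inl 2)) ≠ b.1 by omega
          · exact show qc (f (.inl 2)) ≠ b.1 by omega
        · exact h.elim
        · exact h.elim
      intro x y hxy
      rw [F1, SimpleGraph.fromRel_adj] at hxy
      rcases hxy.2 with h' | h'
      · exact main x y h'
      · exact (main y x h').symm
end

section
/- Let k ≥ 4 and s ∈ {4,…,k}, and let F = F_{enc,s,k}(u,v,w; y₄,…,y_k) be obtained by gluing the gadgets F₁, F₄, …, F_k (identifying the shared vertices u, v, w, y₄,…,y_k). Let f assign colors in [k] to A = {u,v,w,y₄,…,y_k} with f(y_i) = i for 4 ≤ i ≤ k. Then f extends to a proper k-coloring of F if and only if exactly one of the following holds: (a) f(u) ∈ {1,2,3} and f(u) = f(v) = f(w); (b) f(u) = s, f(v), f(w) ∈ {1,2,3}, and f(v) ≠ f(w); (c) f(u) ∈ {4,…,k} \ {s} and f(v) = f(w) ∈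 {1,2,3}. -/
/-- Internal (non-shared) vertices of the pieces of the gadget
`F_{enc,s,k}`.  A pair `(r, i)` denotes the `i`-th internal vertex of the
piece `F_r`; `r = 1` stands for the piece `F₁`, which has internal vertices
`v₁, v₂, w₁, w₂` (indices `0,1,2,3`); the piece `F_s` has internal vertices
`u', w₁, w₂` (indices `0,1,2`); a piece `F_r` with `r ∈ {4,…,k} \ {s}` has
internal vertices `u', v₁, v₂, w₁, w₂` (indices `0,1,2,3,4`). -/
def EncInt (k s : ℕ) : Type :=
  {p : ℕ × ℕ // (p.1 = 1 ∧ p.2 < 4) ∨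
    (4 ≤ p.1 ∧ p.1 ≤ k ∧ ((p.1 = s ∧ p.2 < 3) ∨ (p.1 ≠ s ∧ p.2 < 5)))}

/-- Vertices of `F_{enc,s,k}(u,v,w;y₄,…,y_k)`: the shared vertices `u = 0`,
`v = 1`, `w = 2` and `y₄,…,y_k`, plus the internal vertices of the pieces. -/
def EV (k s : ℕ) : Type := Fin 3 ⊕ Yk k ⊕ EncInt k s

/-- The adjacency (before symmetrization) of the gadget `F_{enc,s,k}`,
obtained by gluing the pieces `F₁, F₄, …, F_k` along `u, v, w, y₄, …, y_k`. -/
def encRel (k s : ℕ) : EV k s → EV k s → Prop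
  | .inl a, .inr (.inl _) => a ≠ 0
  | .inl a, .inr (.inr p) =>
      (p.1.1 = 1 ∧ (a = 0 ∨ (a = 1 ∧ p.1.2 < 2) ∨ (a = 2 ∧ 2 ≤ p.1.2)))
      ∨ (p.1.1 = s ∧ ((a = 0 ∧ p.1.2 = 0) ∨ (a = 1 ∧ p.1.2 = 0) ∨ (a = 2 ∧ p.1.2 ≠ 0)))
      ∨ (4 ≤ p.1.1 ∧ p.1.1 ≠ s ∧ ((a = 0 ∧ p.1.2 = 0) ∨ (a = 1 ∧ (p.1.2 = 1 ∨ p.1.2 = 2))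
          ∨ (a = 2 ∧ (p.1.2 = 3 ∨ p.1.2 = 4))))
  | .inr (.inl j), .inr (.inr p) => ¬(p.1.1 = j.1 ∧ p.1.2 = 0)
  | .inr (.inr p), .inr (.inr q) =>
      p.1.1 = q.1.1 ∧
      ((p.1.1 = 1 ∧ (p.1.2, q.1.2) ∈ ([(0,1),(2,3)] : List (ℕ × ℕ)))
       ∨ (p.1.1 = s ∧ (p.1.2, q.1.2) ∈ ([(0,1),(0,2),(1,2)] : List (ℕ × ℕ)))
       ∨ (4 ≤ p.1.1 ∧ p.1.1 ≠ s ∧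
          (p.1.2, q.1.2) ∈ ([(0,1),(0,2),(0,3),(0,4),(1,2),(3,4)] : List (ℕ × ℕ))))
  | _, _ => False

/-- The gadget `F_{enc,s,k}(u,v,w;y₄,…,y_k)`. -/
def Fenc (k s : ℕ) : SimpleGraph (EV k s) := SimpleGraph.fromRel (encRel k s)

/-!
Every vertex of `F_{enc,s,k}` except `u` and the vertices `u'` is adjacent to all of
`y₄, …, y_k` and so is coloured from `{1,2,3}`; the `u'` of `F_r` may also take the colour `r`.
The pieces are glued from diamonds (`K₄` minus an edge), whose two non-adjacent vertices get
the same colour in any colouring from `{1,2,3}`. If `f u ≤ 3`, the diamonds of `F₁` force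
`f v = f u = f w`. If `f u = s`, the vertex `u'` of `F_s` is coloured from `{1,2,3}` and the
diamond `u' w₁ w₂ w` gives `f w = f u' ≠ f v`. If `f u = r ∉ {1,2,3,s}`, the vertex `u'` of `F_r`
is coloured from `{1,2,3}` and its diamonds through `v₁ v₂` and `w₁ w₂` give `f v = f u' = f w`.

Conversely, colour the `u'` of `F_r` by `r`, or by `f w` when `f u = r`, and each pair
`v₁ v₂` (resp. `w₁ w₂`) by the two colours of `{1,2,3}` other than `f v` (resp. `f w`).
-/

lemma IsProperKColoring.eq_of_diamond {V : Type*} {G : SimpleGraph V} {k : ℕ} {c : V → ℕ}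
    (hc : IsProperKColoring G k c) {x y a b : V} (hab : G.Adj a b) (hxa : G.Adj x a)
    (hxb : G.Adj x b) (hya : G.Adj y a) (hyb : G.Adj y b)
    (hx : c x ≤ 3) (hy : c y ≤ 3) (ha : c a ≤ 3) (hb : c b ≤ 3) : c x = c y := by
  have := hc.2 hab; have := hc.2 hxa; have := hc.2 hxb; have := hc.2 hya; have := hc.2 hyb
  have := Finset.mem_Icc.1 (hc.1 a); have := Finset.mem_Icc.1 (hc.1 b)
  have := Finset.mem_Icc.1 (hc.1 x); have := Finset.mem_Icc.1 (hc.1 y)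
  omega

namespace Fenc

variable {k s : ℕ}

lemma encRel_irrefl (x : EV k s) : ¬encRel k s x x := by
  rcases x with a | y | ⟨⟨r, i⟩, hri⟩ <;> simp [encRel]
  omega

lemma adj_of_encRel {x y : EV k s} (h : encRel k s x y) : (Fenc k s).Adj x y :=
  (SimpleGraph.fromRel_adj _ _ _).2 ⟨fun e => encRel_irrefl x (e ▸ h), Or.inl h⟩

abbrev innerVertex (r i : ℕ)
    (hri : (r = 1 ∧ i < 4) ∨ (4 ≤ r ∧ r ≤ k ∧ ((r = s ∧ i < 3) ∨ (r ≠ s ∧ i < 5))) := by omega) :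
    EV k s :=
  .inr (.inr ⟨(r, i), hri⟩)

variable {c : EV k s → ℕ}

lemma _root_.IsProperKColoring.ne_of_encRel (hc : IsProperKColoring (Fenc k s) k c)
    {x y : EV k s} (h : encRel k s x y) : c x ≠ c y :=
  hc.2 (adj_of_encRel h)

lemma color_le_three_of_adj_y (hc : IsProperKColoring (Fenc k s) k c)
    (hcy : ∀ y : Yk k, c (.inr (.inl y)) = y.1) {x : EV k s}
    (hx : ∀ y : Yk k, y.1 = c x → (Fenc k s).Adj x (.inr (.inl y))) : c x ≤ 3 := by
  by_contra! h
  let y : Yk k := ⟨c x, h, (Finset.mem_Icc.1 (hc.1 x)).2⟩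
  exact hc.2 (hx y rfl) (hcy y).symm

lemma color_shared_le_three (hc : IsProperKColoring (Fenc k s) k c)
    (hcy : ∀ y : Yk k, c (.inr (.inl y)) = y.1) {a : Fin 3} (ha : a ≠ 0) : c (.inl a) ≤ 3 :=
  color_le_three_of_adj_y hc hcy fun _ _ => adj_of_encRel ha

lemma color_innerVertex_le_three_or_eq (hc : IsProperKColoring (Fenc k s) k c)
    (hcy : ∀ y : Yk k, c (.inr (.inl y)) = y.1) (r i : ℕ)
    (hri : (r = 1 ∧ i < 4) ∨ (4 ≤ r ∧ r ≤ k ∧ ((r = s ∧ i < 3) ∨ (r ≠ s ∧ i < 5))) := by omega) :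
    c (innerVertex r i hri) ≤ 3 ∨ (i = 0 ∧ c (innerVertex r i hri) = r) := by
  by_cases h : i = 0 ∧ c (innerVertex r i hri) = r
  · exact .inr h
  · refine .inl (color_le_three_of_adj_y hc hcy fun y hy => ?_)
    exact (adj_of_encRel (x := .inr (.inl y)) (y := innerVertex r i hri)
      fun h' => h ⟨h'.2, hy ▸ h'.1.symm⟩).symm

lemma color_u_eq_v_and_w_of_le_three (hc : IsProperKColoring (Fenc k s) k c)
    (hcy : ∀ y : Yk k, c (.inr (.inl y)) = y.1) (hu : c (.inl 0) ≤ 3) :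
    c (.inl 0) = c (.inl 1) ∧ c (.inl 0) = c (.inl 2) := by
  have hv := color_shared_le_three hc hcy (a := 1) (by decide)
  have hw := color_shared_le_three hc hcy (a := 2) (by decide)
  have hinner (i : ℕ) (hi : i < 4) : c (innerVertex 1 i) ≤ 3 := by
    have := color_innerVertex_le_three_or_eq hc hcy 1 i
    omega
  constructor
  · refine hc.eq_of_diamond (a := innerVertex 1 0) (b := innerVertex 1 1) ?_ ?_ ?_ ?_ ?_ hu hv
      (hinner 0 (by norm_num)) (hinner 1 (by norm_num)) <;>
      exact adj_of_encRel (by simp [encRel])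
  · refine hc.eq_of_diamond (a := innerVertex 1 2) (b := innerVertex 1 3) ?_ ?_ ?_ ?_ ?_ hu hw
      (hinner 2 (by norm_num)) (hinner 3 (by norm_num)) <;>
      exact adj_of_encRel (by simp [encRel])

lemma color_v_ne_w_of_color_u_eq_s (hc : IsProperKColoring (Fenc k s) k c)
    (hcy : ∀ y : Yk k, c (.inr (.inl y)) = y.1) (hs : 4 ≤ s ∧ s ≤ k) (hu : c (.inl 0) = s) :
    c (.inl 1) ≠ c (.inl 2) := by
  have hw := color_shared_le_three hc hcy (a := 2) (by decide)
  have h₀ := color_innerVertex_le_three_or_eq hc hcy s 0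
  have h₁ := color_innerVertex_le_three_or_eq hc hcy s 1
  have h₂ := color_innerVertex_le_three_or_eq hc hcy s 2
  have hu₀ := hc.ne_of_encRel (x := .inl 0) (y := innerVertex s 0) (by simp [encRel])
  have hv₀ := hc.ne_of_encRel (x := .inl 1) (y := innerVertex s 0) (by simp [encRel])
  have hw₀ : c (innerVertex s 0) = c (.inl 2) := by
    refine hc.eq_of_diamond (a := innerVertex s 1) (b := innerVertex s 2) ?_ ?_ ?_ ?_ ?_
      (by omega) hw (by omega) (by omega) <;>
      exact adj_of_encRel (by simp [encRel])
  omega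

lemma color_v_eq_w_of_color_u_ne_s (hc : IsProperKColoring (Fenc k s) k c)
    (hcy : ∀ y : Yk k, c (.inr (.inl y)) = y.1) (hu : 4 ≤ c (.inl 0)) (hus : c (.inl 0) ≠ s) :
    c (.inl 1) = c (.inl 2) := by
  have := Finset.mem_Icc.1 (hc.1 (.inl 0))
  set r := c (.inl 0)
  have hv := color_shared_le_three hc hcy (a := 1) (by decide)
  have hw := color_shared_le_three hc hcy (a := 2) (by decide)
  have h₀ := color_innerVertex_le_three_or_eq hc hcy r 0
  have h₁ := color_innerVertex_le_three_or_eq hc hcy r 1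
  have h₂ := color_innerVertex_le_three_or_eq hc hcy r 2
  have h₃ := color_innerVertex_le_three_or_eq hc hcy r 3
  have h₄ := color_innerVertex_le_three_or_eq hc hcy r 4
  have hu₀ := hc.ne_of_encRel (x := .inl 0) (y := innerVertex r 0) (by simp [encRel, *])
  have hv₀ : c (innerVertex r 0) = c (.inl 1) := by
    refine hc.eq_of_diamond (a := innerVertex r 1) (b := innerVertex r 2) ?_ ?_ ?_ ?_ ?_
      (by omega) hv (by omega) (by omega) <;>
      exact adj_of_encRel (by simp [encRel, *])
  have hw₀ : c (innerVertex r 0) = c (.inl 2) := by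
    refine hc.eq_of_diamond (a := innerVertex r 3) (b := innerVertex r 4) ?_ ?_ ?_ ?_ ?_
      (by omega) hw (by omega) (by omega) <;>
      exact adj_of_encRel (by simp [encRel, *])
  omega

def Admissible (k s cu cv cw : ℕ) : Prop :=
  1 ≤ cu ∧ cu ≤ k ∧ 1 ≤ cv ∧ cv ≤ 3 ∧ 1 ≤ cw ∧ cw ≤ 3 ∧
    (cu ≤ 3 → cu = cv ∧ cu = cw) ∧ (cu = s → cv ≠ cw) ∧ (4 ≤ cu → cu ≠ s → cv = cw)

lemma admissible_of_isProperKColoring (hc : IsProperKColoring (Fenc k s) k c)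
    (hcy : ∀ y : Yk k, c (.inr (.inl y)) = y.1) (hs : 4 ≤ s ∧ s ≤ k) :
    Admissible k s (c (.inl 0)) (c (.inl 1)) (c (.inl 2)) := by
  have hu := Finset.mem_Icc.1 (hc.1 (.inl 0))
  have hv := Finset.mem_Icc.1 (hc.1 (.inl 1))
  have hw := Finset.mem_Icc.1 (hc.1 (.inl 2))
  have hv₃ := color_shared_le_three hc hcy (a := 1) (by decide)
  have hw₃ := color_shared_le_three hc hcy (a := 2) (by decide)
  exact ⟨hu.1, hu.2, hv.1, hv₃, hw.1, hw₃, color_u_eq_v_and_w_of_le_three hc hcy,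
    color_v_ne_w_of_color_u_eq_s hc hcy hs, color_v_eq_w_of_color_u_ne_s hc hcy⟩

def otherColor₁ (x : ℕ) : ℕ := if x = 1 then 2 else 1

def otherColor₂ (x : ℕ) : ℕ := if x = 3 then 2 else 3

def innerColor (s cu cv cw r : ℕ) : ℕ → ℕ
  | 0 => if r = 1 then otherColor₁ cv else if cu = r then cw else r
  | 1 => if r = 1 then otherColor₂ cv else if r = s then otherColor₁ cw else otherColor₁ cv
  | 2 => if r = 1 then otherColor₁ cw else if r = s then otherColor₂ cw else otherColor₂ cv
  | 3 => if r = 1 then otherColor₂ cw else otherColor₁ cw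
  | _ => otherColor₂ cw

def extensionColoring (k s cu cv cw : ℕ) : EV k s → ℕ
  | .inl a => ![cu, cv, cw] a
  | .inr (.inl y) => y.1
  | .inr (.inr p) => innerColor s cu cv cw p.1.1 p.1.2

lemma extensionColoring_mem {cu cv cw : ℕ} (h : Admissible k s cu cv cw) (hs : 4 ≤ s ∧ s ≤ k)
    (x : EV k s) : extensionColoring k s cu cv cw x ∈ Finset.Icc 1 k := by
  obtain ⟨h₁, h₂, h₃, h₄, h₅, h₆, -⟩ := h
  rw [Finset.mem_Icc]
  rcases x with a | ⟨j, hj⟩ | ⟨⟨r, i⟩, hri⟩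
  · fin_cases a <;> simp [extensionColoring] <;> omega
  · simp only [extensionColoring]; omega
  · simp only [extensionColoring]
    have hi : i < 5 := by change _ ∨ _ at hri; omega
    interval_cases i <;> simp only [innerColor, otherColor₁, otherColor₂] <;> split_ifs <;> omega

lemma extensionColoring_ne_of_encRel {cu cv cw : ℕ} (h : Admissible k s cu cv cw) (hs : 4 ≤ s)
    {x y : EV k s} (hxy : encRel k s x y) :
    extensionColoring k s cu cv cw x ≠ extensionColoring k s cu cv cw y := by
  obtain ⟨h₁, h₂, h₃, h₄, h₅, h₆, ha, hb, hc⟩ := h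
  simp only [imp_iff_not_or] at ha hb hc
  rcases x with a | ⟨j, hj⟩ | ⟨⟨r, i⟩, hri⟩ <;> rcases y with b | ⟨j', hj'⟩ | ⟨⟨r', i'⟩, hri'⟩ <;>
    simp only [encRel] at hxy
  · fin_cases a <;> simp [extensionColoring] at hxy ⊢ <;> omega
  · have hi : i' < 5 := by change _ ∨ _ at hri'; omega
    simp only [extensionColoring]
    interval_cases i' <;> fin_cases a <;> simp [innerColor, otherColor₁, otherColor₂] at hxy ⊢ <;>
      split_ifs <;> omega
  · have hi : i' < 5 := by change _ ∨ _ at hri'; omega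
    simp only [extensionColoring]
    interval_cases i' <;> simp only [innerColor, otherColor₁, otherColor₂] <;> split_ifs <;> omega
  · obtain ⟨rfl, hxy⟩ := hxy
    simp only [List.mem_cons, Prod.mk.injEq, List.not_mem_nil, or_false] at hxy
    simp only [extensionColoring]
    rcases hxy with ⟨rfl, ⟨rfl, rfl⟩ | ⟨rfl, rfl⟩⟩ | ⟨hr, ⟨rfl, rfl⟩ | ⟨rfl, rfl⟩ | ⟨rfl, rfl⟩⟩ |
      ⟨hr, hrs, ⟨rfl, rfl⟩ | ⟨rfl, rfl⟩ | ⟨rfl, rfl⟩ | ⟨rfl, rfl⟩ | ⟨rfl, rfl⟩ | ⟨rfl, rfl⟩⟩ <;>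
      simp only [innerColor, otherColor₁, otherColor₂] <;> split_ifs <;> omega

lemma isProperKColoring_extensionColoring {cu cv cw : ℕ} (h : Admissible k s cu cv cw)
    (hs : 4 ≤ s ∧ s ≤ k) : IsProperKColoring (Fenc k s) k (extensionColoring k s cu cv cw) := by
  refine ⟨extensionColoring_mem h hs, fun x y hxy => ?_⟩
  obtain ⟨-, hxy | hyx⟩ := (SimpleGraph.fromRel_adj _ _ _).1 hxy
  · exact extensionColoring_ne_of_encRel h hs.1 hxy
  · exact (extensionColoring_ne_of_encRel h hs.1 hyx).symm

lemma exactlyOne_iff_admissible (hs : 4 ≤ s ∧ s ≤ k) (cu cv cw : ℕ) :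
    (letI A : Prop := cu ∈ ({1,2,3} : Set ℕ) ∧ cu = cv ∧ cv = cw
     letI B : Prop := cu = s ∧ cv ∈ ({1,2,3} : Set ℕ) ∧ cw ∈ ({1,2,3} : Set ℕ) ∧ cv ≠ cw
     letI C : Prop := cu ∈ Finset.Icc 4 k ∧ cu ≠ s ∧ cv = cw ∧ cv ∈ ({1,2,3} : Set ℕ)
     (A ∧ ¬B ∧ ¬C) ∨ (¬A ∧ B ∧ ¬C) ∨ (¬A ∧ ¬B ∧ C)) ↔ Admissible k s cu cv cw := by
  simp only [Admissible, Set.mem_insert_iff, Set.mem_singleton_iff, Finset.mem_Icc]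
  omega

end Fenc

open Fenc

theorem Fenc_extension_general (k s : ℕ) (hs : 4 ≤ s ∧ s ≤ k)
    (f : EV k s → ℕ)
    (hfy : ∀ y : Yk k, f (.inr (.inl y)) = y.1) :
    (∃ c : EV k s → ℕ, IsProperKColoring (Fenc k s) k c ∧
        c (.inl 0) = f (.inl 0) ∧ c (.inl 1) = f (.inl 1) ∧ c (.inl 2) = f (.inl 2) ∧
        ∀ y : Yk k, c (.inr (.inl y)) = f (.inr (.inl y))) ↔
      (letI A : Prop := f (.inl 0) ∈ ({1,2,3} : Set ℕ) ∧
          f (.inl 0) = f (.inl 1) ∧ f (.inl 1) = f (.inl 2)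
       letI B : Prop := f (.inl 0) = s ∧ f (.inl 1) ∈ ({1,2,3} : Set ℕ) ∧
          f (.inl 2) ∈ ({1,2,3} : Set ℕ) ∧ f (.inl 1) ≠ f (.inl 2)
       letI C : Prop := f (.inl 0) ∈ Finset.Icc 4 k ∧ f (.inl 0) ≠ s ∧
          f (.inl 1) = f (.inl 2) ∧ f (.inl 1) ∈ ({1,2,3} : Set ℕ)
       (A ∧ ¬B ∧ ¬C) ∨ (¬A ∧ B ∧ ¬C) ∨ (¬A ∧ ¬B ∧ C)) := by
  refine Iff.trans ?_ (exactlyOne_iff_admissible hs _ _ _).symm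
  constructor
  · rintro ⟨c, hc, hu, hv, hw, hy⟩
    rw [← hu, ← hv, ← hw]
    exact admissible_of_isProperKColoring hc (fun y => (hy y).trans (hfy y)) hs
  · exact fun h => ⟨extensionColoring k s _ _ _, isProperKColoring_extensionColoring h hs,
      rfl, rfl, rfl, fun y => (hfy y).symm⟩

/-- A function `f` on `A = {u,v,w,y₄,…,y_k}` with `f(yᵢ) = i` extends to a
proper `k`-coloring of `F_{enc,s,k}` iff exactly one of the following holds:
(a) `f u ∈ {1,2,3}` and `f u = f v = f w`;
(b) `f u = s`, `f v, f w ∈ {1,2,3}` and `f v ≠ f w`;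
(c) `f u ∈ {4,…,k} \ {s}` and `f v = f w ∈ {1,2,3}`. -/
theorem Fenc_extension (k s : ℕ) (hk : 4 ≤ k) (hs : 4 ≤ s ∧ s ≤ k)
    (f : EV k s → ℕ)
    (hfu : f (.inl 0) ∈ Finset.Icc 1 k) (hfv : f (.inl 1) ∈ Finset.Icc 1 k)
    (hfw : f (.inl 2) ∈ Finset.Icc 1 k)
    (hfy : ∀ y : Yk k, f (.inr (.inl y)) = y.1) :
    (∃ c : EV k s → ℕ, IsProperKColoring (Fenc k s) k c ∧
        c (.inl 0) = f (.inl 0) ∧ c (.inl 1) = f (.inl 1) ∧ c (.inl 2) = f (.inl 2) ∧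
        ∀ y : Yk k, c (.inr (.inl y)) = f (.inr (.inl y))) ↔
      (letI A : Prop := f (.inl 0) ∈ ({1,2,3} : Set ℕ) ∧
          f (.inl 0) = f (.inl 1) ∧ f (.inl 1) = f (.inl 2)
       letI B : Prop := f (.inl 0) = s ∧ f (.inl 1) ∈ ({1,2,3} : Set ℕ) ∧
          f (.inl 2) ∈ ({1,2,3} : Set ℕ) ∧ f (.inl 1) ≠ f (.inl 2)
       letI C : Prop := f (.inl 0) ∈ Finset.Icc 4 k ∧ f (.inl 0) ≠ s ∧
          f (.inl 1) = f (.inl 2) ∧ f (.inl 1) ∈ ({1,2,3} : Set ℕ)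
       (A ∧ ¬B ∧ ¬C) ∨ (¬A ∧ B ∧ ¬C) ∨ (¬A ∧ ¬B ∧ C)) :=
  Fenc_extension_general k s hs f hfy
end

section
/- Let G₁ and G₂ be graphs whose vertex-set intersection S = V(G₁) ∩ V(G₂) induces a complete graph in both G₁ and G₂, and let G = G₁ ∪ G₂ (the clique-sum without deleting edges). If both G₁ and G₂ are K_m-minor-free, then G is K_m-minor-free. -/
/-- `G` has a `K_m` minor, expressed via a minor model. -/
def HasCliqueMinor {V : Type*} (G : SimpleGraph V) (m : ℕ) : Prop :=
  ∃ μ : Fin m → Set V,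
    (∀ i, (μ i).Nonempty ∧ (G.induce (μ i)).Connected) ∧
    (∀ i j, i ≠ j → Disjoint (μ i) (μ j)) ∧
    (∀ i j, i ≠ j → ∃ a ∈ μ i, ∃ b ∈ μ j, G.Adj a b)

section CliqueSumAux

variable {V : Type*} (G₁ G₂ : SimpleGraph V) (A B : Set V)

/-- In the induced graph on `s ∩ A`, two vertices of the clique `S = A ∩ B`
are reachable from each other (adjacent or equal). -/
lemma cs_reachS (hS1 : ∀ x ∈ A ∩ B, ∀ y ∈ A ∩ B, x ≠ y → G₁.Adj x y)
    (s : Set V) {p q : V} (hp : p ∈ s ∩ A) (hq : q ∈ s ∩ A)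
    (hpB : p ∈ B) (hqB : q ∈ B) :
    (G₁.induce (s ∩ A)).Reachable ⟨p, hp⟩ ⟨q, hq⟩ := by
  rcases eq_or_ne p q with rfl | hne
  · exact SimpleGraph.Reachable.refl _
  · exact SimpleGraph.Adj.reachable (by
      show G₁.Adj p q
      exact hS1 p ⟨hp.2, hpB⟩ q ⟨hq.2, hqB⟩ hne)

/-- Key walk lemma: along any walk in the induced subgraph on `s` of the
clique-sum ending at a vertex of `A`, there is a vertex `x ∈ s ∩ A`
reachable (inside `G₁.induce (s ∩ A)`) from the end, such that `x` is
either the start itself or lies in `B` (with the start also in `B`). -/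
lemma cs_keyWalk (hcover : A ∪ B = Set.univ)
    (h1 : ∀ ⦃x y⦄, G₁.Adj x y → x ∈ A ∧ y ∈ A)
    (h2 : ∀ ⦃x y⦄, G₂.Adj x y → x ∈ B ∧ y ∈ B)
    (hS1 : ∀ x ∈ A ∩ B, ∀ y ∈ A ∩ B, x ≠ y → G₁.Adj x y)
    (s : Set V) :
    ∀ {u v : s} (_w : ((G₁ ⊔ G₂).induce s).Walk u v) (hv : v.1 ∈ A),
      ∃ (x : V) (hx : x ∈ s ∩ A),
        (G₁.induce (s ∩ A)).Reachable ⟨x, hx⟩ ⟨v.1, ⟨v.2, hv⟩⟩ ∧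
        (x = u.1 ∨ (x ∈ B ∧ u.1 ∈ B)) := by
  intro u v w
  induction w with
  | @nil a =>
    intro hv
    exact ⟨a.1, ⟨a.2, hv⟩, SimpleGraph.Reachable.refl _, Or.inl rfl⟩
  | @cons a b c hadj w ih =>
    intro hv
    have hadjG : (G₁ ⊔ G₂).Adj a.1 b.1 := hadj
    have hmemb : b.1 ∈ A ∪ B := by rw [hcover]; exact Set.mem_univ _
    by_cases hbA : b.1 ∈ A
    · obtain ⟨x, hx, hre, hdis⟩ := ih hv
      rcases hadjG with hg1 | hg2
      · -- edge in G₁ : a ∈ A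
        have haA : a.1 ∈ A := (h1 hg1).1
        refine ⟨a.1, ⟨a.2, haA⟩, ?_, Or.inl rfl⟩
        have r1 : (G₁.induce (s ∩ A)).Reachable ⟨a.1, ⟨a.2, haA⟩⟩ ⟨b.1, ⟨b.2, hbA⟩⟩ :=
          SimpleGraph.Adj.reachable (by show G₁.Adj a.1 b.1; exact hg1)
        have r2 : (G₁.induce (s ∩ A)).Reachable ⟨b.1, ⟨b.2, hbA⟩⟩ ⟨x, hx⟩ := by
          rcases hdis with rfl | ⟨hxB, hbB⟩
          · exact SimpleGraph.Reachable.refl _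
          · exact cs_reachS G₁ A B hS1 s ⟨b.2, hbA⟩ hx hbB hxB
        exact (r1.trans r2).trans hre
      · -- edge in G₂ : a, b ∈ B
        have haB : a.1 ∈ B := (h2 hg2).1
        have hbB : b.1 ∈ B := (h2 hg2).2
        by_cases haA : a.1 ∈ A
        · refine ⟨a.1, ⟨a.2, haA⟩, ?_, Or.inl rfl⟩
          have r1 : (G₁.induce (s ∩ A)).Reachable ⟨a.1, ⟨a.2, haA⟩⟩ ⟨b.1, ⟨b.2, hbA⟩⟩ :=
            cs_reachS G₁ A B hS1 s ⟨a.2, haA⟩ ⟨b.2, hbA⟩ haB hbB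
          have r2 : (G₁.induce (s ∩ A)).Reachable ⟨b.1, ⟨b.2, hbA⟩⟩ ⟨x, hx⟩ := by
            rcases hdis with rfl | ⟨hxB, hbB'⟩
            · exact SimpleGraph.Reachable.refl _
            · exact cs_reachS G₁ A B hS1 s ⟨b.2, hbA⟩ hx hbB hxB
          exact (r1.trans r2).trans hre
        · refine ⟨x, hx, hre, Or.inr ⟨?_, haB⟩⟩
          rcases hdis with rfl | ⟨hxB, _⟩
          · exact hbB
          · exact hxB
    · -- b ∉ A, so b ∈ B and the edge a-b must be in G₂, so a ∈ B
      have hbB : b.1 ∈ B := hmemb.resolve_left hbA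
      have haB : a.1 ∈ B := by
        rcases hadjG with hg1 | hg2
        · exact absurd (h1 hg1).2 hbA
        · exact (h2 hg2).1
      obtain ⟨x, hx, hre, hdis⟩ := ih hv
      refine ⟨x, hx, hre, Or.inr ⟨?_, haB⟩⟩
      rcases hdis with rfl | ⟨hxB, _⟩
      · exact absurd hx.2 hbA
      · exact hxB

/-- If two vertices of `s ∩ A` are connected in the induced clique-sum on `s`,
they are connected in `G₁` induced on `s ∩ A`. -/
lemma cs_reachInA (hcover : A ∪ B = Set.univ)
    (h1 : ∀ ⦃x y⦄, G₁.Adj x y → x ∈ A ∧ y ∈ A)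
    (h2 : ∀ ⦃x y⦄, G₂.Adj x y → x ∈ B ∧ y ∈ B)
    (hS1 : ∀ x ∈ A ∩ B, ∀ y ∈ A ∩ B, x ≠ y → G₁.Adj x y)
    (s : Set V) {u v : s} (hu : u.1 ∈ A) (hv : v.1 ∈ A)
    (h : ((G₁ ⊔ G₂).induce s).Reachable u v) :
    (G₁.induce (s ∩ A)).Reachable ⟨u.1, ⟨u.2, hu⟩⟩ ⟨v.1, ⟨v.2, hv⟩⟩ := by
  obtain ⟨w⟩ := h
  obtain ⟨x, hx, hre, hdis⟩ := cs_keyWalk G₁ G₂ A B hcover h1 h2 hS1 s w hv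
  rcases hdis with rfl | ⟨hxB, huB⟩
  · exact hre
  · exact (cs_reachS G₁ A B hS1 s ⟨u.2, hu⟩ hx huB hxB).trans hre

/-- If a connected set `s` (in the clique-sum) meets both `A` and the
complement of `A`, it meets `A ∩ B`. -/
lemma cs_meetsS (hcover : A ∪ B = Set.univ)
    (h1 : ∀ ⦃x y⦄, G₁.Adj x y → x ∈ A ∧ y ∈ A)
    (h2 : ∀ ⦃x y⦄, G₂.Adj x y → x ∈ B ∧ y ∈ B)
    (hS1 : ∀ x ∈ A ∩ B, ∀ y ∈ A ∩ B, x ≠ y → G₁.Adj x y)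
    (s : Set V) (hconn : ((G₁ ⊔ G₂).induce s).Connected)
    {a b : V} (ha : a ∈ s) (haA : a ∈ A) (hb : b ∈ s) (hbA : b ∉ A) :
    ∃ x ∈ s, x ∈ A ∧ x ∈ B := by
  obtain ⟨w⟩ := hconn.preconnected ⟨b, hb⟩ ⟨a, ha⟩
  obtain ⟨x, hx, _, hdis⟩ := cs_keyWalk G₁ G₂ A B hcover h1 h2 hS1 s w haA
  rcases hdis with rfl | ⟨hxB, _⟩
  · exact absurd hx.2 hbA
  · exact ⟨x, hx.1, hx.2, hxB⟩

/-- Main auxiliary lemma: if a minor model in the clique-sum has no branch set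
entirely inside `B \ A`, then `G₁` has a `K_m` minor. -/
lemma cs_aux (hcover : A ∪ B = Set.univ)
    (h1 : ∀ ⦃x y⦄, G₁.Adj x y → x ∈ A ∧ y ∈ A)
    (h2 : ∀ ⦃x y⦄, G₂.Adj x y → x ∈ B ∧ y ∈ B)
    (hS1 : ∀ x ∈ A ∩ B, ∀ y ∈ A ∩ B, x ≠ y → G₁.Adj x y)
    (m : ℕ) (μ : Fin m → Set V)
    (hconn : ∀ i, (μ i).Nonempty ∧ (((G₁ ⊔ G₂)).induce (μ i)).Connected)
    (hdisj : ∀ i j, i ≠ j → Disjoint (μ i) (μ j))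
    (hedge : ∀ i j, i ≠ j → ∃ a ∈ μ i, ∃ b ∈ μ j, (G₁ ⊔ G₂).Adj a b)
    (hQ : ∀ i, ¬ (μ i ⊆ B \ A)) :
    HasCliqueMinor G₁ m := by
  have hmeetA : ∀ i, ∃ a, a ∈ μ i ∩ A := by
    intro i
    obtain ⟨a, ha, hnot⟩ := Set.not_subset.mp (hQ i)
    have : a ∈ A ∪ B := by rw [hcover]; exact Set.mem_univ _
    rcases this with haA | haB
    · exact ⟨a, ha, haA⟩
    · exact ⟨a, ha, by_contra fun haA => hnot ⟨haB, haA⟩⟩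
  have hmS : ∀ (k : Fin m) (c : V), c ∈ μ k → c ∈ B →
      ∃ x ∈ μ k, x ∈ A ∧ x ∈ B := by
    intro k c hc hcB
    by_cases hcA : c ∈ A
    · exact ⟨c, hc, hcA, hcB⟩
    · obtain ⟨a, ha, haA⟩ := hmeetA k
      exact cs_meetsS G₁ G₂ A B hcover h1 h2 hS1 (μ k) (hconn k).2 ha haA hc hcA
  refine ⟨fun i => μ i ∩ A, ?_, ?_, ?_⟩
  · intro i
    obtain ⟨a, ha⟩ := hmeetA i
    refine ⟨⟨a, ha⟩, ?_⟩
    rw [SimpleGraph.connected_iff]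
    refine ⟨?_, ⟨⟨a, ha⟩⟩⟩
    rintro ⟨u, hu, huA⟩ ⟨v, hv, hvA⟩
    have hr := (hconn i).2.preconnected ⟨u, hu⟩ ⟨v, hv⟩
    exact cs_reachInA G₁ G₂ A B hcover h1 h2 hS1 (μ i) huA hvA hr
  · intro i j hij
    exact (hdisj i j hij).mono Set.inter_subset_left Set.inter_subset_left
  · intro i j hij
    obtain ⟨a, ha, b, hb, hab⟩ := hedge i j hij
    rcases hab with hg1 | hg2
    · exact ⟨a, ⟨ha, (h1 hg1).1⟩, b, ⟨hb, (h1 hg1).2⟩, hg1⟩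
    · obtain ⟨x, hxμ, hxA, hxB⟩ := hmS i a ha (h2 hg2).1
      obtain ⟨y, hyμ, hyA, hyB⟩ := hmS j b hb (h2 hg2).2
      have hne : x ≠ y := by
        intro h
        exact (Set.disjoint_left.mp (hdisj i j hij) hxμ) (h ▸ hyμ)
      exact ⟨x, ⟨hxμ, hxA⟩, y, ⟨hyμ, hyA⟩, hS1 x ⟨hxA, hxB⟩ y ⟨hyA, hyB⟩ hne⟩

end CliqueSumAux

/-- Let `G₁` and `G₂` be graphs with vertex sets `A` and `B` covering the
ambient type, whose intersection `S = A ∩ B` induces a complete graph in both,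
and let `G = G₁ ∪ G₂` (the clique-sum without deleting edges).  If `G₁` and
`G₂` are `K_m`-minor-free, then so is `G`. -/
theorem cliqueSum_minor_free {V : Type*} (G₁ G₂ : SimpleGraph V) (A B : Set V)
    (hcover : A ∪ B = Set.univ)
    (h1 : ∀ ⦃x y⦄, G₁.Adj x y → x ∈ A ∧ y ∈ A)
    (h2 : ∀ ⦃x y⦄, G₂.Adj x y → x ∈ B ∧ y ∈ B)
    (hS1 : ∀ x ∈ A ∩ B, ∀ y ∈ A ∩ B, x ≠ y → G₁.Adj x y)
    (hS2 : ∀ x ∈ A ∩ B, ∀ y ∈ A ∩ B, x ≠ y → G₂.Adj x y)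
    (m : ℕ) (hm1 : ¬ HasCliqueMinor G₁ m) (hm2 : ¬ HasCliqueMinor G₂ m) :
    ¬ HasCliqueMinor (G₁ ⊔ G₂) m := by
  rintro ⟨μ, hc, hd, he⟩
  by_cases hQ : ∀ i, ¬ (μ i ⊆ B \ A)
  · exact hm1 (cs_aux G₁ G₂ A B hcover h1 h2 hS1 m μ hc hd he hQ)
  · push_neg at hQ
    obtain ⟨i₀, hi₀⟩ := hQ
    have hsup : G₁ ⊔ G₂ = G₂ ⊔ G₁ := sup_comm _ _
    rw [hsup] at hc he
    have hQ' : ∀ j, ¬ (μ j ⊆ A \ B) := by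
      intro j hj
      rcases eq_or_ne j i₀ with rfl | hne
      · obtain ⟨a, ha⟩ := (hc j).1
        exact (hi₀ ha).2 (hj ha).1
      · obtain ⟨a, ha, b, hb, hab⟩ := he i₀ j hne.symm
        rcases hab with hg2 | hg1
        · exact (hj hb).2 (h2 hg2).2
        · exact (hi₀ ha).2 (h1 hg1).1
    refine hm2 (cs_aux G₂ G₁ B A ?_ h2 h1 ?_ m μ hc hd he hQ')
    · rw [Set.union_comm]; exact hcover
    · intro x hx y hy hne
      exact hS2 x ⟨hx.2, hx.1⟩ y ⟨hy.2, hy.1⟩ hne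
end

section
/- Let G be a graph, X ⊆ V(G), and suppose G is the clique-sum of G₀ and G' over a clique S, where X ⊆ V(G₀) and V(G') ∩ X ⊆ S. If G₀ is X-rooted-K_{k+1}-minor-free and both G₀ and G' are K_{k+2}-minor-free, then G is X-rooted-K_{k+1}-minor-free and K_{k+2}-minor-free. -/
/-- `G` has an `X`-rooted `K_m` minor: a minor model of `K_m` each of whose
branch sets meets `X`. -/
def HasRootedCliqueMinor {V : Type*} (G : SimpleGraph V) (X : Set V) (m : ℕ) : Prop :=
  ∃ μ : Fin m → Set V,
    (∀ i, (μ i ∩ X).Nonempty ∧ (G.induce (μ i)).Connected) ∧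
    (∀ i j, i ≠ j → Disjoint (μ i) (μ j)) ∧
    (∀ i j, i ≠ j → ∃ a ∈ μ i, ∃ b ∈ μ j, G.Adj a b)

section Aux

variable {V : Type*} {H K : SimpleGraph V} {A B : Set V}

/-- Key walk-induction lemma: from a walk in `(H ⊔ K).induce μ` ending in `A`,
extract a vertex `s ∈ μ ∩ A` reachable (in `H.induce (μ ∩ A)`) from the
endpoint, with control on `s`. -/
lemma reach_aux
    (hH : ∀ ⦃x y⦄, H.Adj x y → x ∈ A ∧ y ∈ A)
    (hK : ∀ ⦃x y⦄, K.Adj x y → x ∈ B ∧ y ∈ B)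
    (hSH : ∀ x ∈ A ∩ B, ∀ y ∈ A ∩ B, x ≠ y → H.Adj x y)
    {μ : Set V} {p v : ↥μ} (W : ((H ⊔ K).induce μ).Walk p v) (hvA : (v : V) ∈ A) :
    ∃ s : ↥(μ ∩ A), ((p : V) ∈ A → (s : V) = (p : V)) ∧ ((p : V) ∉ A → (s : V) ∈ B) ∧
      (H.induce (μ ∩ A)).Reachable s ⟨v, v.2, hvA⟩ := by
  revert hvA
  induction W with
  | nil =>
      intro hvA
      exact ⟨⟨_, ‹↥μ›.2, hvA⟩, fun _ => rfl, fun h => absurd hvA h, SimpleGraph.Reachable.refl _⟩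
  | @cons p q v h W ih =>
      intro hvA
      obtain ⟨s, hs1, hs2, hsr⟩ := ih hvA
      have hadj : H.Adj (p : V) (q : V) ∨ K.Adj (p : V) (q : V) := h
      by_cases hqA : (q : V) ∈ A
      · have hsq : (s : V) = (q : V) := hs1 hqA
        by_cases hpA : (p : V) ∈ A
        · -- edge within A is an H-edge
          have hHpq : H.Adj (p : V) (q : V) := by
            rcases hadj with h1 | h1
            · exact h1
            · exact hSH _ ⟨hpA, (hK h1).1⟩ _ ⟨hqA, (hK h1).2⟩ h1.ne
          have hadj' : (H.induce (μ ∩ A)).Adj ⟨p, p.2, hpA⟩ ⟨q, q.2, hqA⟩ := hHpq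
          have : (⟨q, q.2, hqA⟩ : ↥(μ ∩ A)) = s := Subtype.ext hsq.symm
          exact ⟨⟨p, p.2, hpA⟩, fun _ => rfl, fun h => absurd hpA h,
            (hadj'.reachable).trans (this ▸ hsr)⟩
        · -- p ∉ A : the edge p-q must be a K-edge, so q ∈ B
          have hKpq : K.Adj (p : V) (q : V) := by
            rcases hadj with h1 | h1
            · exact absurd (hH h1).1 hpA
            · exact h1
          refine ⟨s, fun h => absurd h hpA, fun _ => ?_, hsr⟩
          rw [hsq]; exact (hK hKpq).2
      · -- q ∉ A : edge p-q is a K-edge, so p ∈ B; s ∈ B from ih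
        have hKpq : K.Adj (p : V) (q : V) := by
          rcases hadj with h1 | h1
          · exact absurd (hH h1).2 hqA
          · exact h1
        have hsB : (s : V) ∈ B := hs2 hqA
        by_cases hpA : (p : V) ∈ A
        · have hpB : (p : V) ∈ B := (hK hKpq).1
          by_cases hps : (p : V) = (s : V)
          · refine ⟨⟨p, p.2, hpA⟩, fun _ => rfl, fun h => absurd hpA h, ?_⟩
            have : (⟨p, p.2, hpA⟩ : ↥(μ ∩ A)) = s := Subtype.ext hps
            exact this ▸ hsr
          · have hHps : H.Adj (p : V) (s : V) :=
              hSH _ ⟨hpA, hpB⟩ _ ⟨s.2.2, hsB⟩ hps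
            have hadj' : (H.induce (μ ∩ A)).Adj ⟨p, p.2, hpA⟩ s := hHps
            exact ⟨⟨p, p.2, hpA⟩, fun _ => rfl, fun h => absurd hpA h,
              hadj'.reachable.trans hsr⟩
        · exact ⟨s, fun h => absurd h hpA, fun _ => hsB, hsr⟩

end Aux

section Aux2

variable {V : Type*} {H K : SimpleGraph V} {A B : Set V}

lemma push_conn
    (hH : ∀ ⦃x y⦄, H.Adj x y → x ∈ A ∧ y ∈ A)
    (hK : ∀ ⦃x y⦄, K.Adj x y → x ∈ B ∧ y ∈ B)
    (hSH : ∀ x ∈ A ∩ B, ∀ y ∈ A ∩ B, x ≠ y → H.Adj x y)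
    {μ : Set V} (hne : (μ ∩ A).Nonempty)
    (hconn : ((H ⊔ K).induce μ).Connected) : (H.induce (μ ∩ A)).Connected := by
  rw [SimpleGraph.connected_iff]
  refine ⟨fun x y => ?_, ⟨⟨hne.choose, hne.choose_spec⟩⟩⟩
  obtain ⟨W⟩ := hconn.preconnected ⟨x, x.2.1⟩ ⟨y, y.2.1⟩
  obtain ⟨s, h1, _, hr⟩ := reach_aux hH hK hSH W y.2.2
  have hsx : s = x := Subtype.ext (h1 x.2.2)
  have hy : (⟨(y : V), y.2.1, y.2.2⟩ : ↥(μ ∩ A)) = y := Subtype.ext rfl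
  rw [hsx, hy] at hr
  exact hr

/-- If a connected `μ` meets both `A` and its complement, it meets `A ∩ B`. -/
lemma meets_inter
    (hH : ∀ ⦃x y⦄, H.Adj x y → x ∈ A ∧ y ∈ A)
    (hK : ∀ ⦃x y⦄, K.Adj x y → x ∈ B ∧ y ∈ B)
    (hSH : ∀ x ∈ A ∩ B, ∀ y ∈ A ∩ B, x ≠ y → H.Adj x y)
    {μ : Set V} (hconn : ((H ⊔ K).induce μ).Connected)
    {p v : V} (hp : p ∈ μ) (hpA : p ∉ A) (hv : v ∈ μ) (hvA : v ∈ A) :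
    ∃ s ∈ μ, s ∈ A ∩ B := by
  obtain ⟨W⟩ := hconn.preconnected ⟨p, hp⟩ ⟨v, hv⟩
  obtain ⟨s, _, h2, _⟩ := reach_aux hH hK hSH W hvA
  exact ⟨s, s.2.1, s.2.2, h2 hpA⟩

/-- Pushing a clique minor model of `H ⊔ K` into `H`, given that every branch
set meets `A`. -/
lemma push_model
    (hH : ∀ ⦃x y⦄, H.Adj x y → x ∈ A ∧ y ∈ A)
    (hK : ∀ ⦃x y⦄, K.Adj x y → x ∈ B ∧ y ∈ B)
    (hSH : ∀ x ∈ A ∩ B, ∀ y ∈ A ∩ B, x ≠ y → H.Adj x y)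
    {m : ℕ} {μ : Fin m → Set V}
    (hc : ∀ i, ((H ⊔ K).induce (μ i)).Connected)
    (hd : ∀ i j, i ≠ j → Disjoint (μ i) (μ j))
    (ha : ∀ i j, i ≠ j → ∃ a ∈ μ i, ∃ b ∈ μ j, (H ⊔ K).Adj a b)
    (hA : ∀ i, (μ i ∩ A).Nonempty) :
    (∀ i, (μ i ∩ A).Nonempty ∧ (H.induce (μ i ∩ A)).Connected) ∧
    (∀ i j, i ≠ j → Disjoint (μ i ∩ A) (μ j ∩ A)) ∧
    (∀ i j, i ≠ j → ∃ a ∈ μ i ∩ A, ∃ b ∈ μ j ∩ A, H.Adj a b) := by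
  refine ⟨fun i => ⟨hA i, push_conn hH hK hSH (hA i) (hc i)⟩,
    fun i j hij => ((hd i j hij).mono Set.inter_subset_left Set.inter_subset_left),
    fun i j hij => ?_⟩
  obtain ⟨a, ha', b, hb', hab⟩ := ha i j hij
  -- helper: get a vertex of μ t ∩ A ∩ B when x ∈ μ t with x ∉ A, else x itself if x ∈ A ∩ B
  by_cases haA : a ∈ A
  · by_cases hbA : b ∈ A
    · -- edge inside A is an H-edge
      have : H.Adj a b := by
        rcases hab with h1 | h1
        · exact h1
        · exact hSH _ ⟨haA, (hK h1).1⟩ _ ⟨hbA, (hK h1).2⟩ h1.ne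
      exact ⟨a, ⟨ha', haA⟩, b, ⟨hb', hbA⟩, this⟩
    · -- b ∉ A: edge is K-edge, a ∈ B; pick s ∈ μ j ∩ A ∩ B
      have hKab : K.Adj a b := by
        rcases hab with h1 | h1
        · exact absurd (hH h1).2 hbA
        · exact h1
      obtain ⟨w, hw⟩ := hA j
      obtain ⟨s, hsμ, hsAB⟩ := meets_inter hH hK hSH (hc j) hb' hbA hw.1 hw.2
      have hne : a ≠ s := fun h => (hd i j hij).ne_of_mem ha' hsμ h
      exact ⟨a, ⟨ha', haA⟩, s, ⟨hsμ, hsAB.1⟩,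
        hSH _ ⟨haA, (hK hKab).1⟩ _ hsAB hne⟩
  · have hKab : K.Adj a b := by
      rcases hab with h1 | h1
      · exact absurd (hH h1).1 haA
      · exact h1
    obtain ⟨w, hw⟩ := hA i
    obtain ⟨s, hsμ, hsAB⟩ := meets_inter hH hK hSH (hc i) ha' haA hw.1 hw.2
    by_cases hbA : b ∈ A
    · have hne : s ≠ b := fun h => (hd i j hij).ne_of_mem hsμ hb' h
      exact ⟨s, ⟨hsμ, hsAB.1⟩, b, ⟨hb', hbA⟩,
        hSH _ hsAB _ ⟨hbA, (hK hKab).2⟩ hne⟩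
    · obtain ⟨w', hw'⟩ := hA j
      obtain ⟨t, htμ, htAB⟩ := meets_inter hH hK hSH (hc j) hb' hbA hw'.1 hw'.2
      have hne : s ≠ t := fun h => (hd i j hij).ne_of_mem hsμ htμ h
      exact ⟨s, ⟨hsμ, hsAB.1⟩, t, ⟨htμ, htAB.1⟩, hSH _ hsAB _ htAB hne⟩

end Aux2

/-- Let `G` be the clique-sum of `G₀` (on vertex set `A`) and `G'` (on vertex
set `B`) over the clique `S = A ∩ B`, with `X ⊆ A` and `B ∩ X ⊆ S`.  If `G₀`
is `X`-rooted-`K_{k+1}`-minor-free and both `G₀` and `G'` are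
`K_{k+2}`-minor-free, then `G = G₀ ∪ G'` is `X`-rooted-`K_{k+1}`-minor-free
and `K_{k+2}`-minor-free. -/
theorem cliqueSum_rooted_minor_free {V : Type*} (G₀ G' : SimpleGraph V)
    (A B : Set V) (X : Set V) (k : ℕ)
    (hcover : A ∪ B = Set.univ)
    (h0 : ∀ ⦃x y⦄, G₀.Adj x y → x ∈ A ∧ y ∈ A)
    (h' : ∀ ⦃x y⦄, G'.Adj x y → x ∈ B ∧ y ∈ B)
    (hS0 : ∀ x ∈ A ∩ B, ∀ y ∈ A ∩ B, x ≠ y → G₀.Adj x y)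
    (hS' : ∀ x ∈ A ∩ B, ∀ y ∈ A ∩ B, x ≠ y → G'.Adj x y)
    (hXA : X ⊆ A) (hXB : B ∩ X ⊆ A ∩ B)
    (hroot : ¬ HasRootedCliqueMinor G₀ X (k + 1))
    (hm0 : ¬ HasCliqueMinor G₀ (k + 2)) (hm' : ¬ HasCliqueMinor G' (k + 2)) :
    ¬ HasRootedCliqueMinor (G₀ ⊔ G') X (k + 1) ∧
      ¬ HasCliqueMinor (G₀ ⊔ G') (k + 2) := by
  have hS'' : ∀ x ∈ B ∩ A, ∀ y ∈ B ∩ A, x ≠ y → G'.Adj x y := by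
    rw [Set.inter_comm]; exact hS'
  constructor
  · rintro ⟨μ, hc, hd, ha⟩
    have hA : ∀ i, (μ i ∩ A).Nonempty := fun i =>
      ((hc i).1).mono (Set.inter_subset_inter_right _ hXA)
    obtain ⟨hc', hd', ha'⟩ :=
      push_model h0 h' hS0 (fun i => (hc i).2) hd ha hA
    refine hroot ⟨fun i => μ i ∩ A, fun i => ⟨?_, (hc' i).2⟩, hd', ha'⟩
    · obtain ⟨x, hx⟩ := (hc i).1
      exact ⟨x, ⟨hx.1, hXA hx.2⟩, hx.2⟩
  · rintro ⟨μ, hc, hd, ha⟩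
    by_cases hA : ∀ i, (μ i ∩ A).Nonempty
    · obtain ⟨hc', hd', ha'⟩ :=
        push_model h0 h' hS0 (fun i => (hc i).2) hd ha hA
      exact hm0 ⟨fun i => μ i ∩ A, fun i => ⟨(hc' i).1, (hc' i).2⟩, hd', ha'⟩
    · push_neg at hA
      obtain ⟨i0, hi0⟩ := hA
      have hi0B : μ i0 ⊆ B := by
        intro x hx
        have hxA : x ∉ A := fun h => Set.eq_empty_iff_forall_notMem.mp hi0 x ⟨hx, h⟩
        have := Set.mem_univ x
        rw [← hcover] at this
        rcases this with h | h
        · exact absurd h hxA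
        · exact h
      have hB : ∀ j, (μ j ∩ B).Nonempty := by
        intro j
        by_cases hji : j = i0
        · subst hji
          obtain ⟨x, hx⟩ := (hc j).1
          exact ⟨x, hx, hi0B hx⟩
        · obtain ⟨a, haμ, b, hbμ, hab⟩ := ha i0 j (fun h => hji h.symm)
          have haA : a ∉ A := fun h => Set.eq_empty_iff_forall_notMem.mp hi0 a ⟨haμ, h⟩
          have hK : G'.Adj a b := by
            rcases hab with h1 | h1
            · exact absurd (h0 h1).1 haA
            · exact h1
          exact ⟨b, hbμ, (h' hK).2⟩
      have hsup : G₀ ⊔ G' = G' ⊔ G₀ := sup_comm G₀ G'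
      obtain ⟨hc', hd', ha'⟩ :=
        push_model (A := B) (B := A) h' h0 hS''
          (fun i => by rw [← hsup]; exact (hc i).2)
          hd (fun i j hij => by rw [← hsup]; exact ha i j hij) hB
      exact hm' ⟨fun i => μ i ∩ B, fun i => ⟨(hc' i).1, (hc' i).2⟩, hd', ha'⟩
end

section
/- Let k ≥ 4 and s ∈ {4,…,k}. The graph F⁺_{enc,s,k}, obtained from the gadget F_{enc,s,k}(u,v,w; y₄,…,y_k) by adding all edges of a clique on {u, v, w, y₄, …, y_k}, is K_{k+2}-minor-free. -/
/-- The shared vertices `u, v, w, y₄, …, y_k` of the gadget. -/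
def isShared {k s : ℕ} : EV k s → Prop
  | .inr (.inr _) => False
  | _ => True

/-- `F⁺_{enc,s,k}`: the gadget `F_{enc,s,k}` together with all edges of a
clique on `{u, v, w, y₄, …, y_k}`. -/
def FencPlus (k s : ℕ) : SimpleGraph (EV k s) :=
  SimpleGraph.fromRel (fun x y => encRel k s x y ∨ (isShared x ∧ isShared y))

/-!
There are only `k` shared vertices `u, v, w, y₄, …, y_k`, so two branch sets `A`, `B` of a
`K_{k+2}` model avoid them. Internal vertices of different pieces are never adjacent, so the
adjacent connected sets `A`, `B` lie in a single piece, and one of them, say `A`, misses the hub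
`u'` of that piece. Then `A` lies inside a matching edge `{p, p'}` (`v₁v₂` or `w₁w₂`), whose
neighbours outside it are the `y_j` and two anchors (`u` and `v`/`w` in `F₁`, `u'` and `v`/`w`
elsewhere). Being adjacent to `A` and disjoint from it, `B` contains `p'` or an anchor, so the
other `k` branch sets meet pairwise distinct neighbours of `A` among the at most
`(k - 3) + 2 = k - 1` that remain.
-/

open Function

section MinorModel

variable {V : Type*} {G : SimpleGraph V}

lemma Finset.card_le_ncard_of_pairwiseDisjoint {ι : Type*} {μ : ι → Set V}
    (hdisj : Pairwise (Disjoint on μ)) {S : Set V} (hS : S.Finite) {I : Finset ι}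
    (hI : ∀ l ∈ I, (μ l ∩ S).Nonempty) : I.card ≤ S.ncard := by
  classical
  calc I.card ≤ (I.biUnion fun l => hS.toFinset.filter (· ∈ μ l)).card := by
        refine Finset.card_le_card_biUnion ?_ fun l hl => ?_
        · intro l₁ _ l₂ _ hne
          simp only [Function.onFun, Finset.disjoint_left, Finset.mem_filter]
          exact fun z hz₁ hz₂ => (hdisj hne).ne_of_mem hz₁.2 hz₂.2 rfl
        · obtain ⟨z, hzμ, hzS⟩ := hI l hl
          exact ⟨z, by simpa using ⟨hzS, hzμ⟩⟩
    _ ≤ hS.toFinset.card :=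
        Finset.card_le_card (Finset.biUnion_subset.2 fun _ _ => Finset.filter_subset _ _)
    _ = S.ncard := (Set.ncard_eq_toFinset_card S hS).symm

lemma exists_ne_disjoint_of_ncard_add_two_le {m : ℕ} {μ : Fin m → Set V}
    (hdisj : Pairwise (Disjoint on μ)) {X : Set V} (hX : X.Finite) (hm : X.ncard + 2 ≤ m) :
    ∃ i j, i ≠ j ∧ Disjoint (μ i) X ∧ Disjoint (μ j) X := by
  classical
  set D := Finset.univ.filter fun l => ¬ Disjoint (μ l) X
  have hD : D.card ≤ X.ncard := Finset.card_le_ncard_of_pairwiseDisjoint hdisj hX fun l hl =>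
    Set.not_disjoint_iff_nonempty_inter.1 (Finset.mem_filter.1 hl).2
  have : 1 < Dᶜ.card := by rw [Finset.card_compl, Fintype.card_fin]; omega
  obtain ⟨i, hi, j, hj, hij⟩ := Finset.one_lt_card.1 this
  simp only [D, Finset.mem_compl, Finset.mem_filter, Finset.mem_univ, true_and, not_not] at hi hj
  exact ⟨i, j, hij, hi, hj⟩

lemma card_le_ncard_add_two_of_nbhd_subset {m : ℕ} {μ : Fin m → Set V}
    (hdisj : Pairwise (Disjoint on μ))
    (hadj : ∀ i j, i ≠ j → ∃ a ∈ μ i, ∃ b ∈ μ j, G.Adj a b)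
    {i j : Fin m} (hij : i ≠ j) {S : Set V} (hS : S.Finite)
    (hN : ∀ a ∈ μ i, ∀ z, G.Adj a z → z ∉ μ i → z ∉ μ j → z ∈ S) : m ≤ S.ncard + 2 := by
  classical
  have hcard : ((Finset.univ.erase i).erase j).card = m - 2 := by
    rw [Finset.card_erase_of_mem (by simpa using hij.symm), Finset.card_erase_of_mem (by simp),
      Finset.card_univ, Fintype.card_fin]; omega
  have : m - 2 ≤ S.ncard := hcard ▸ Finset.card_le_ncard_of_pairwiseDisjoint hdisj hS fun l hl => by
    obtain ⟨hlj, hli⟩ : l ≠ j ∧ l ≠ i := by simpa using hl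
    obtain ⟨a, ha, z, hz, haz⟩ := hadj i l (Ne.symm hli)
    exact ⟨z, hz, hN a ha z haz (fun h => (hdisj hli).ne_of_mem hz h rfl)
      (fun h => (hdisj hlj).ne_of_mem hz h rfl)⟩
  omega

lemma subset_of_induce_connected {A K X : Set V} (hA : (G.induce A).Connected)
    (hAX : Disjoint A X) (hK : ∀ z ∈ K, ∀ w, G.Adj z w → w ∈ K ∨ w ∈ X)
    {x : V} (hxA : x ∈ A) (hxK : x ∈ K) : A ⊆ K := by
  have key : ∀ w : A, (G.induce A).Reachable ⟨x, hxA⟩ w → (w : V) ∈ K := by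
    intro w hw
    rw [SimpleGraph.reachable_iff_reflTransGen] at hw
    induction hw with
    | refl => exact hxK
    | tail _ hzw ih =>
      exact (hK _ ih _ hzw).resolve_right (Set.disjoint_left.1 hAX (Subtype.prop _))
  exact fun y hyA => key ⟨y, hyA⟩ (hA.preconnected _ _)

lemma mem_insert_of_adj_of_closed_pair {A C : Set V} {x y : V} (hA : (G.induce A).Connected)
    (hxA : x ∈ A) (hAC : Disjoint A C)
    (hpair : ∀ z ∈ ({x, y} : Set V), ∀ w, G.Adj z w → w ∈ insert x (insert y C))
    {a w : V} (ha : a ∈ A) (haw : G.Adj a w) (hw : w ∉ A) : w ∈ insert y C := by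
  have hAxy : A ⊆ {x, y} := subset_of_induce_connected hA hAC (fun z hz w hzw => by
    simpa [or_assoc] using hpair z hz w hzw) hxA (by simp)
  exact (hpair a (hAxy ha) w haw).resolve_left fun h => hw (h ▸ hxA)

end MinorModel

section Vertices

variable {k s : ℕ}

def EV.base (a : Fin 3) : EV k s := Sum.inl a

def Yk.toEV (j : Yk k) : EV k s := Sum.inr (Sum.inl j)

def EncInt.toEV (p : EncInt k s) : EV k s := Sum.inr (Sum.inr p)

instance : Finite (Yk k) := (Set.finite_Icc 4 k).to_subtype

lemma Yk.card_eq : Nat.card (Yk k) = k - 3 := by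
  change (Set.Icc 4 k).ncard = k - 3
  rw [Set.ncard_Icc_nat]
  omega

lemma Yk.toEV_injective : Function.Injective (Yk.toEV : Yk k → EV k s) :=
  Sum.inr_injective.comp Sum.inl_injective

end Vertices

namespace EncInt

variable {k s : ℕ}

lemma toEV_injective : Function.Injective (toEV : EncInt k s → EV k s) :=
  Sum.inr_injective.comp Sum.inr_injective

/-- `p` is the vertex `u'` of a piece `F_r` with `r ≥ 4`. -/
def IsHub (p : EncInt k s) : Prop := 4 ≤ p.1.1 ∧ p.1.2 = 0

def hub (p : EncInt k s) : EncInt k s := ⟨(p.1.1, 0), by have := p.2; omega⟩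

/-- The partner of `p` in the matching `v₁v₂, w₁w₂`, whose index pairs are `{0,1}, {2,3}` in `F₁`
and `{1,2}, {3,4}` in the other pieces; a hub is its own partner. -/
def mate (p : EncInt k s) : EncInt k s :=
  ⟨(p.1.1, if p.1.1 = 1 then p.1.2 + 1 - 2 * (p.1.2 % 2)
    else p.1.2 - 1 + 2 * (p.1.2 % 2)), by
    have := p.2; split_ifs <;> omega⟩

/-- The vertex `v` or `w` that the matching edge at `p` hangs from. -/
def attach (p : EncInt k s) : Fin 3 :=
  if (p.1.1 = 1 ∧ p.1.2 < 2) ∨ (p.1.1 ≠ 1 ∧ p.1.1 ≠ s ∧ p.1.2 ≤ 2) then 1 else 2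

/-- Besides the `y_j`, the matching edge `{p, p.mate}` has only these neighbours: `u` and `v`/`w`
in `F₁`, the hub and `v`/`w` in the other pieces. -/
def anchors (p : EncInt k s) : Set (EV k s) :=
  {EV.base p.attach, if p.1.1 = 1 then EV.base 0 else p.hub.toEV}

lemma IsHub.eq_of_fst_eq {p q : EncInt k s} (hp : p.IsHub) (hq : q.IsHub)
    (h : p.1.1 = q.1.1) : p = q :=
  Subtype.ext (Prod.ext h (hp.2.trans hq.2.symm))

@[simp] lemma mate_mate (p : EncInt k s) : p.mate.mate = p := by
  refine Subtype.ext (Prod.ext rfl ?_)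
  simp only [mate]
  split_ifs <;> omega

@[simp] lemma mate_fst (p : EncInt k s) : p.mate.1.1 = p.1.1 := rfl

lemma not_isHub_mate {p : EncInt k s} (hp : ¬ p.IsHub) : ¬ p.mate.IsHub := by
  simp only [IsHub, mate] at hp ⊢
  split_ifs <;> omega

@[simp] lemma anchors_mate (p : EncInt k s) : p.mate.anchors = p.anchors := by
  have hattach : p.mate.attach = p.attach := by
    simp only [attach, mate]
    split_ifs <;> omega
  simp only [anchors, hattach, mate_fst]
  rfl

end EncInt

section Gadget

variable {k s : ℕ}

open EncInt

def yVerts (k s : ℕ) : Set (EV k s) := Set.range Yk.toEV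

def hubVerts (k s : ℕ) : Set (EV k s) := toEV '' {p | p.IsHub}

def pieceVerts (k s r : ℕ) : Set (EV k s) := toEV '' {p | p.1.1 = r}

lemma exists_toEV_of_not_isShared {x : EV k s} (hx : ¬ isShared x) :
    ∃ p : EncInt k s, p.toEV = x := by
  rcases x with a | j | p
  exacts [absurd trivial hx, absurd trivial hx, ⟨p, rfl⟩]

lemma yVerts_subset_shared : yVerts k s ⊆ {x | isShared x} := by
  rintro _ ⟨j, rfl⟩
  trivial

lemma yVerts_finite : (yVerts k s).Finite := Set.finite_range _

lemma ncard_yVerts : (yVerts k s).ncard = k - 3 := by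
  rw [yVerts, Set.ncard_range_of_injective Yk.toEV_injective, Yk.card_eq]

lemma shared_finite_and_ncard_le (hk : 3 ≤ k) :
    {x : EV k s | isShared x}.Finite ∧ {x : EV k s | isShared x}.ncard ≤ k := by
  let f : Fin 3 ⊕ Yk k → EV k s := Sum.elim EV.base Yk.toEV
  have hf : Function.Injective f :=
    Sum.inl_injective.sumElim Yk.toEV_injective fun _ _ => Sum.inl_ne_inr
  have hsub : {x : EV k s | isShared x} ⊆ Set.range f := by
    rintro (a | j | p) hx
    exacts [⟨Sum.inl a, rfl⟩, ⟨Sum.inr j, rfl⟩, hx.elim]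
  refine ⟨(Set.finite_range f).subset hsub, (Set.ncard_le_ncard hsub (Set.finite_range f)).trans ?_⟩
  rw [Set.ncard_range_of_injective hf, Nat.card_sum, Yk.card_eq, Nat.card_eq_fintype_card,
    Fintype.card_fin]
  omega

@[simp] lemma not_isShared_toEV (p : EncInt k s) : ¬ isShared p.toEV := id

lemma fencPlus_adj {x y : EV k s} : (FencPlus k s).Adj x y ↔
    x ≠ y ∧ (encRel k s x y ∨ encRel k s y x ∨ isShared x ∧ isShared y) := by
  simp only [FencPlus, SimpleGraph.fromRel_adj]
  tauto

lemma fencPlus_adj_toEV_base {p : EncInt k s} {a : Fin 3} :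
    (FencPlus k s).Adj p.toEV (EV.base a) ↔ encRel k s (EV.base a) p.toEV := by
  unfold EV.base
  refine fencPlus_adj.trans ⟨fun h => ?_, fun h => ⟨Sum.inr_ne_inl, Or.inr (Or.inl h)⟩⟩
  simpa [toEV, EV.base, encRel, isShared] using h.2

lemma fencPlus_adj_toEV_toEV {p q : EncInt k s} : (FencPlus k s).Adj p.toEV q.toEV ↔
    p ≠ q ∧ (encRel k s p.toEV q.toEV ∨ encRel k s q.toEV p.toEV) := by
  refine fencPlus_adj.trans ?_
  simp [toEV_injective.ne_iff]

lemma fst_eq_of_fencPlus_adj {p q : EncInt k s} (h : (FencPlus k s).Adj p.toEV q.toEV) :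
    p.1.1 = q.1.1 := by
  rcases (fencPlus_adj_toEV_toEV.1 h).2 with h | h
  exacts [h.1, h.1.symm]

lemma eq_attach_of_fencPlus_adj {p : EncInt k s} (hs : s ≠ 1) (hp : ¬ p.IsHub) {a : Fin 3}
    (h : (FencPlus k s).Adj p.toEV (EV.base a)) : a = p.attach ∨ (p.1.1 = 1 ∧ a = 0) := by
  obtain ⟨⟨r, i⟩, hri⟩ := p
  replace h := fencPlus_adj_toEV_base.1 h
  simp only [IsHub] at hp
  fin_cases a <;> simp [toEV, EV.base, encRel, attach] at h hri hp ⊢ <;> omega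

lemma eq_mate_of_fencPlus_adj {p q : EncInt k s} (hs : s ≠ 1) (hp : ¬ p.IsHub)
    (h : (FencPlus k s).Adj p.toEV q.toEV) : q = p.mate ∨ (p.1.1 ≠ 1 ∧ q = p.hub) := by
  obtain ⟨⟨r, i⟩, hri⟩ := p
  obtain ⟨⟨r', i'⟩, hri'⟩ := q
  replace h := (fencPlus_adj_toEV_toEV.1 h).2
  simp only [IsHub] at hp
  refine (or_congr Subtype.ext_iff (and_congr_right fun _ => Subtype.ext_iff)).2 ?_
  simp [toEV, encRel, mate, hub] at h hri hri' hp ⊢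
  split_ifs <;> omega

lemma mem_mate_anchors_of_fencPlus_adj {p : EncInt k s} (hs : s ≠ 1) (hp : ¬ p.IsHub)
    {z : EV k s} (h : (FencPlus k s).Adj p.toEV z) :
    z ∈ insert p.mate.toEV (p.anchors ∪ yVerts k s) := by
  rcases z with a | j | q
  · rcases eq_attach_of_fencPlus_adj hs hp h with rfl | ⟨h1, rfl⟩
    · exact Or.inr (Or.inl (Or.inl rfl))
    · exact Or.inr (Or.inl (Or.inr (by rw [if_pos h1]; rfl)))
  · exact Or.inr (Or.inr ⟨j, rfl⟩)
  · rcases eq_mate_of_fencPlus_adj hs hp h with rfl | ⟨h1, rfl⟩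
    · exact Or.inl rfl
    · exact Or.inr (Or.inl (Or.inr (by rw [if_neg h1]; rfl)))

lemma pair_mate_nbhd_subset {p : EncInt k s} (hs : s ≠ 1) (hp : ¬ p.IsHub) :
    ∀ z ∈ ({p.toEV, p.mate.toEV} : Set (EV k s)), ∀ w, (FencPlus k s).Adj z w →
      w ∈ insert p.toEV (insert p.mate.toEV (p.anchors ∪ yVerts k s)) := by
  rintro z (rfl | rfl) w h
  · exact Set.mem_insert_of_mem _ (mem_mate_anchors_of_fencPlus_adj hs hp h)
  · have hw := mem_mate_anchors_of_fencPlus_adj hs (not_isHub_mate hp) h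
    rw [mate_mate, anchors_mate] at hw
    rcases hw with rfl | hw
    exacts [Set.mem_insert _ _, Set.mem_insert_of_mem _ (Set.mem_insert_of_mem _ hw)]

lemma subset_pieceVerts {A : Set (EV k s)} (hA : ((FencPlus k s).induce A).Connected)
    (hAs : Disjoint A {x | isShared x}) {p : EncInt k s} (hp : p.toEV ∈ A) :
    A ⊆ pieceVerts k s p.1.1 := by
  refine subset_of_induce_connected hA hAs ?_ hp ⟨p, rfl, rfl⟩
  rintro _ ⟨q, hq, rfl⟩ w hw
  by_cases hws : isShared w
  · exact Or.inr hws
  · obtain ⟨q', rfl⟩ := exists_toEV_of_not_isShared hws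
    exact Or.inl ⟨q', (fst_eq_of_fencPlus_adj hw).symm.trans hq, rfl⟩

lemma disjoint_hubVerts_or {A B : Set (EV k s)} (hA : ((FencPlus k s).induce A).Connected)
    (hB : ((FencPlus k s).induce B).Connected) (hAs : Disjoint A {x | isShared x})
    (hBs : Disjoint B {x | isShared x}) (hAB : Disjoint A B) {a b : EV k s} (ha : a ∈ A)
    (hb : b ∈ B) (hab : (FencPlus k s).Adj a b) :
    Disjoint A (hubVerts k s) ∨ Disjoint B (hubVerts k s) := by
  obtain ⟨p, rfl⟩ := exists_toEV_of_not_isShared (Set.disjoint_left.1 hAs ha)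
  obtain ⟨q, rfl⟩ := exists_toEV_of_not_isShared (Set.disjoint_left.1 hBs hb)
  have hApiece := subset_pieceVerts hA hAs ha
  have hBpiece := (fst_eq_of_fencPlus_adj hab) ▸ subset_pieceVerts hB hBs hb
  by_contra! h
  obtain ⟨_, hxA, ⟨p₁, hp₁, rfl⟩⟩ := Set.not_disjoint_iff.1 h.1
  obtain ⟨_, hyB, ⟨q₁, hq₁, rfl⟩⟩ := Set.not_disjoint_iff.1 h.2
  obtain ⟨p₂, hp₂, hpx⟩ := hApiece hxA
  obtain ⟨q₂, hq₂, hqy⟩ := hBpiece hyB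
  obtain rfl := toEV_injective hpx
  obtain rfl := toEV_injective hqy
  obtain rfl := IsHub.eq_of_fst_eq hp₁ hq₁ (hp₂.trans hq₂.symm)
  exact Set.disjoint_left.1 hAB hxA hyB

lemma anchors_subset (p : EncInt k s) : p.anchors ⊆ {x | isShared x} ∪ hubVerts k s := by
  rintro _ (rfl | h)
  · exact Or.inl trivial
  · rw [Set.mem_singleton_iff] at h
    split_ifs at h with h1
    · exact h ▸ Or.inl trivial
    · exact Or.inr ⟨p.hub, ⟨show 4 ≤ p.1.1 by have := p.2; omega, rfl⟩, h.symm⟩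

lemma ncard_anchors_le (p : EncInt k s) : p.anchors.ncard ≤ 2 :=
  (Set.ncard_insert_le _ _).trans (by simp)

lemma false_of_hubFree_branchSet (hk : 3 ≤ k) (hs : s ≠ 1) {μ : Fin (k + 2) → Set (EV k s)}
    (hdisj : Pairwise (Disjoint on μ))
    (hadj : ∀ i j, i ≠ j → ∃ a ∈ μ i, ∃ b ∈ μ j, (FencPlus k s).Adj a b)
    {i j : Fin (k + 2)} (hij : i ≠ j) (hconn : ((FencPlus k s).induce (μ i)).Connected)
    (hi : Disjoint (μ i) ({x | isShared x} ∪ hubVerts k s)) : False := by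
  obtain ⟨a, ha, b, hb, hab⟩ := hadj i j hij
  obtain ⟨p, rfl⟩ := exists_toEV_of_not_isShared fun h => Set.disjoint_left.1 hi ha (Or.inl h)
  have hp : ¬ p.IsHub := fun h => Set.disjoint_left.1 hi ha (Or.inr ⟨p, h, rfl⟩)
  set C := p.anchors ∪ yVerts k s
  have hAC : Disjoint (μ i) C := hi.mono_right
    (Set.union_subset (anchors_subset p) (yVerts_subset_shared.trans Set.subset_union_left))
  have hnbhd : ∀ a' ∈ μ i, ∀ z, (FencPlus k s).Adj a' z → z ∉ μ i → z ∈ insert p.mate.toEV C :=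
    fun a' ha' z => mem_insert_of_adj_of_closed_pair hconn ha hAC (pair_mate_nbhd_subset hs hp) ha'
  have hb' := hnbhd _ ha b hab fun h => Set.disjoint_left.1 (hdisj hij) h hb
  have hfin : (insert p.mate.toEV C \ {b}).Finite :=
    ((((Set.finite_singleton _).insert _).union yVerts_finite).insert _).sdiff
  have hm := card_le_ncard_add_two_of_nbhd_subset hdisj hadj hij hfin
    fun a' ha' z hz hzi hzj => ⟨hnbhd a' ha' z hz hzi, fun h => hzj (h ▸ hb)⟩
  have hS : (insert p.mate.toEV C \ {b}).ncard ≤ k - 1 := calc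
    _ = (insert p.mate.toEV C).ncard - 1 := Set.ncard_sdiff_singleton_of_mem hb'
    _ ≤ C.ncard := Nat.sub_le_of_le_add (Set.ncard_insert_le _ _)
    _ ≤ p.anchors.ncard + (yVerts k s).ncard := Set.ncard_union_le _ _
    _ ≤ 2 + (k - 3) := add_le_add (ncard_anchors_le p) ncard_yVerts.le
    _ = k - 1 := by omega
  omega

end Gadget

/-- For `k ≥ 4` and `s ∈ {4,…,k}`, the graph `F⁺_{enc,s,k}` is
`K_{k+2}`-minor-free. -/
theorem FencPlus_km_minor_free (k s : ℕ) (hk : 4 ≤ k) (hs : 4 ≤ s ∧ s ≤ k) :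
    ¬ HasCliqueMinor (FencPlus k s) (k+2) := by
  rintro ⟨μ, hconn, hdisj, hadj⟩
  obtain ⟨hfin, hcard⟩ := shared_finite_and_ncard_le (s := s) (by omega : 3 ≤ k)
  obtain ⟨i, j, hij, hi, hj⟩ := exists_ne_disjoint_of_ncard_add_two_le hdisj hfin (by omega)
  obtain ⟨a, ha, b, hb, hab⟩ := hadj i j hij
  rcases disjoint_hubVerts_or (hconn i).2 (hconn j).2 hi hj (hdisj i j hij) ha hb hab with h | h
  · exact false_of_hubFree_branchSet (by omega) (by omega) hdisj hadj hij (hconn i).2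
      (Set.disjoint_union_right.2 ⟨hi, h⟩)
  · exact false_of_hubFree_branchSet (by omega) (by omega) hdisj hadj hij.symm (hconn j).2
      (Set.disjoint_union_right.2 ⟨hj, h⟩)
end

section
/- Let k ≥ 4, let X = {x₁,…,x_m}, Y = {y₄,…,y_k}, Z = {z_{i,j} : i ∈ [m], j ∈ {3,…,k}} be pairwise disjoint sets of vertices, and let G₁ be the graph obtained from X ∪ Y ∪ Z by, for each i ∈ [m] and j ∈ {4,…,k}, adding a new vertex x_{i,j} together with a copy of the gadget F_{copy,k}(x_i, x_{i,j}) and a copy of the gadget F_{enc,j,k}(x_{i,j}, z_{i,j−1}, z_{i,j}; y₄,…,y_k). Then a Y-rainbow function h : X ∪ Y ∪ Z → [k] extends to a proper k-coloring of G₁ if and only if the restriction g of h to Z satisfies: for each i ∈ [m], if h(x_i) ∈ {1,2,3} then g(z_{i,3}) = g(z_{i,4}) = … = g(z_{i,k}) = h(x_i), and if h(x_i) = s ∈ {4,…,k} then g(z_{i,3}) = … = g(z_{i,s−1}) ≠ g(z_{i,s}) = … = g(z_{i,k}) with all these values in {1,2,3}. -/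
/-- Index type for the columns of `Z`: `j ∈ {3,…,k}`. -/
def Zc (k : ℕ) : Type := {j : ℕ // 3 ≤ j ∧ j ≤ k}

/-- Index type for the `k−1` internal vertices of a copy gadget
`F_{copy,k} = K_{k+1} − uv` (its vertices besides `u` and `v`). -/
def Cc (k : ℕ) : Type := {c : ℕ // 2 ≤ c ∧ c ≤ k}

/-- Vertices of the graph `G₁`: the sets `X`, `Y`, `Z`, the vertices
`x_{i,j}` (`xc`), the internal vertices of the copy gadgets
`F_{copy,k}(xᵢ, x_{i,j})` (`ci`), and the internal vertices of the encoding
gadgets `F_{enc,j,k}(x_{i,j}, z_{i,j−1}, z_{i,j}; y₄,…,y_k)` (`ei`). -/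
inductive GV (m k : ℕ) : Type where
  | x : Fin m → GV m k
  | y : Yk k → GV m k
  | z : Fin m → Zc k → GV m k
  | xc : Fin m → Yk k → GV m k
  | ci : Fin m → Yk k → Cc k → GV m k
  | ei : Fin m → Yk k → (ℕ × ℕ) → GV m k

/-- Whether `(r, i) = p` is a legitimate internal vertex of the encoding
gadget with parameter `s`. -/
def encOK (k s : ℕ) (p : ℕ × ℕ) : Prop :=
  (p.1 = 1 ∧ p.2 < 4) ∨
    (4 ≤ p.1 ∧ p.1 ≤ k ∧ ((p.1 = s ∧ p.2 < 3) ∨ (p.1 ≠ s ∧ p.2 < 5)))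

/-- The adjacency (before symmetrization) of the graph `G₁`.  The copy gadget
for `(i,j)` is the complete graph on `{xᵢ, x_{i,j}} ∪ {ci i j c}` minus the
edge `xᵢ x_{i,j}`.  The encoding gadget for `(i,j)` is
`F_{enc,j,k}(u,v,w;y₄,…,y_k)` with `u = x_{i,j}`, `v = z_{i,j−1}`,
`w = z_{i,j}`, glued from the pieces `F₁, F₄, …, F_k`. -/
def grel (m k : ℕ) : GV m k → GV m k → Prop
  | .x i, .ci i' _ _ => i = i'
  | .xc i j, .ci i' j' _ => i = i' ∧ j = j'
  | .ci i j c, .ci i' j' c' => i = i' ∧ j = j' ∧ c ≠ c'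
  | .y _, .z _ _ => True
  | .y jy, .ei _ j p => encOK k j.1 p ∧ ¬(p.1 = jy.1 ∧ p.2 = 0)
  | .xc i j, .ei i' j' p =>
      i = i' ∧ j = j' ∧ encOK k j'.1 p ∧
        (p.1 = 1 ∨ (p.1 = j'.1 ∧ p.2 = 0) ∨ (4 ≤ p.1 ∧ p.1 ≠ j'.1 ∧ p.2 = 0))
  | .z i jz, .ei i' j' p =>
      i = i' ∧ encOK k j'.1 p ∧
        ((jz.1 = j'.1 - 1 ∧
            ((p.1 = 1 ∧ p.2 < 2) ∨ (p.1 = j'.1 ∧ p.2 = 0) ∨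
              (4 ≤ p.1 ∧ p.1 ≠ j'.1 ∧ (p.2 = 1 ∨ p.2 = 2)))) ∨
          (jz.1 = j'.1 ∧
            ((p.1 = 1 ∧ 2 ≤ p.2) ∨ (p.1 = j'.1 ∧ p.2 ≠ 0) ∨
              (4 ≤ p.1 ∧ p.1 ≠ j'.1 ∧ (p.2 = 3 ∨ p.2 = 4)))))
  | .ei i j p, .ei i' j' q =>
      i = i' ∧ j = j' ∧ encOK k j.1 p ∧ encOK k j'.1 q ∧ p.1 = q.1 ∧
        ((p.1 = 1 ∧ (p.2, q.2) ∈ ([(0,1),(2,3)] : List (ℕ × ℕ)))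
          ∨ (p.1 = j.1 ∧ (p.2, q.2) ∈ ([(0,1),(0,2),(1,2)] : List (ℕ × ℕ)))
          ∨ (4 ≤ p.1 ∧ p.1 ≠ j.1 ∧
              (p.2, q.2) ∈ ([(0,1),(0,2),(0,3),(0,4),(1,2),(3,4)] : List (ℕ × ℕ))))
  | _, _ => False

/-- The graph `G₁` of the construction. -/
def G1 (m k : ℕ) : SimpleGraph (GV m k) := SimpleGraph.fromRel (grel m k)


/-! The copy gadget `K_{k+1} − uv` forces `c u = c v` by pigeonhole on its `k − 1` internal
vertices, so every `x_{i,j}` carries the colour `a = h(xᵢ)`. A vertex adjacent to all of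
`y₄, …, y_k` is coloured from `{1,2,3}`; inside `F_{enc,j,k}` this leaves only the three
behaviours in its defining property, and conversely an explicit colouring of the internal vertices realises
each of them. Along the row `z_{i,3}, …, z_{i,k}` the gadget of column `j ≠ a` copies the colour
of column `j − 1` to column `j`, while the gadget of column `a` switches it: this is the row
condition. -/

open Finset

theorem IsProperKColoring.eq_of_forall_adj_of_pairwise_adj {V ι : Type*} [Fintype ι]
    {G : SimpleGraph V} {k : ℕ} {c : V → ℕ} (hc : IsProperKColoring G k c) {u v : V} (f : ι → V)
    (hf : Pairwise fun a b => G.Adj (f a) (f b)) (hcard : k - 1 ≤ Fintype.card ι)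
    (hu : ∀ a, G.Adj u (f a)) (hv : ∀ a, G.Adj v (f a)) : c u = c v := by
  by_contra huv
  have hmaps : ∀ a ∈ (univ : Finset ι), c (f a) ∈ Icc 1 k \ {c u, c v} := by
    intro a _
    simp only [mem_sdiff, mem_insert, mem_singleton, not_or]
    exact ⟨hc.1 _, (hc.2 (hu a)).symm, (hc.2 (hv a)).symm⟩
  have hinj : Set.InjOn (c ∘ f) (univ : Finset ι) := fun a _ b _ hab =>
    by_contra fun hne => hc.2 (hf hne) hab
  have hle := card_le_card_of_injOn _ hmaps hinj
  have hsub : {c u, c v} ⊆ Icc 1 k := by simp [insert_subset_iff, hc.1]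
  rw [card_univ, card_sdiff_of_subset hsub, card_pair huv, Nat.card_Icc] at hle
  have := mem_Icc.1 (hc.1 u)
  have := mem_Icc.1 (hc.1 v)
  omega

theorem IsProperKColoring.le_of_forall_exists_adj {V : Type*} {G : SimpleGraph V} {k : ℕ}
    {c : V → ℕ} (hc : IsProperKColoring G k c) {v : V} (n : ℕ)
    (hv : ∀ t, n < t → t ≤ k → ∃ w, G.Adj w v ∧ c w = t) : c v ≤ n := by
  by_contra hlt
  obtain ⟨w, hwv, hw⟩ := hv (c v) (by omega) (mem_Icc.1 (hc.1 v)).2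
  exact hc.2 hwv hw

instance (k : ℕ) : Fintype (Cc k) := inferInstanceAs (Fintype (Set.Icc 2 k))

theorem Cc.card (k : ℕ) : Fintype.card (Cc k) = k - 1 := by
  rw [show Fintype.card (Cc k) = Fintype.card (Set.Icc 2 k) from rfl, Fintype.card_Icc,
    Nat.card_Icc]
  omega

def Yk.predZc {k : ℕ} (j : Yk k) : Zc k := ⟨j.1 - 1, by have := j.2; omega⟩

def Yk.toZc {k : ℕ} (j : Yk k) : Zc k := ⟨j.1, by have := j.2; omega⟩

def IsYRainbow {m k : ℕ} (c : GV m k → ℕ) : Prop := ∀ t : Yk k, c (.y t) = t.1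

section

variable {m k : ℕ}

theorem grel_irrefl (v : GV m k) : ¬ grel m k v v := by
  cases v <;> simp [grel]
  omega

theorem G1_adj_of_grel {u v : GV m k} (h : grel m k u v) : (G1 m k).Adj u v :=
  (SimpleGraph.fromRel_adj _ _ _).2 ⟨fun huv => grel_irrefl v (huv ▸ h), Or.inl h⟩

namespace IsProperKColoring

variable {c : GV m k → ℕ}

theorem one_le (hc : IsProperKColoring (G1 m k) k c) (v : GV m k) : 1 ≤ c v :=
  (mem_Icc.1 (hc.1 v)).1

theorem ne_of_grel (hc : IsProperKColoring (G1 m k) k c) {u v : GV m k} (h : grel m k u v) :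
    c u ≠ c v :=
  hc.2 (G1_adj_of_grel h)

theorem xc_eq_x (hc : IsProperKColoring (G1 m k) k c) (i : Fin m) (j : Yk k) :
    c (.xc i j) = c (.x i) :=
  (hc.eq_of_forall_adj_of_pairwise_adj (GV.ci i j)
    (fun _ _ hab => G1_adj_of_grel ⟨rfl, rfl, hab⟩) (Cc.card k).ge
    (fun _ => G1_adj_of_grel (u := .x i) rfl)
    (fun _ => G1_adj_of_grel (u := .xc i j) ⟨rfl, rfl⟩)).symm

theorem le_three_of_forall_grel_y (hc : IsProperKColoring (G1 m k) k c) (hy : IsYRainbow c)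
    {v : GV m k} (hv : ∀ t : Yk k, grel m k (.y t) v) : c v ≤ 3 :=
  hc.le_of_forall_exists_adj 3 fun t h3 hk => ⟨.y ⟨t, h3, hk⟩, G1_adj_of_grel (hv _), hy _⟩

theorem z_le_three (hc : IsProperKColoring (G1 m k) k c) (hy : IsYRainbow c) (i : Fin m)
    (jz : Zc k) : c (.z i jz) ≤ 3 :=
  hc.le_three_of_forall_grel_y hy fun _ => trivial

/-- The vertex `u' = (r, 0)` of the piece `F_r` sees every `y_t` but `y_r`, and sees `u`. -/
theorem ei_zero_le_three (hc : IsProperKColoring (G1 m k) k c) (hy : IsYRainbow c)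
    {i : Fin m} {j : Yk k} {r : ℕ} (hr : 4 ≤ r) (hrk : r ≤ k) (hu : c (.xc i j) = r) :
    c (.ei i j (r, 0)) ≤ 3 := by
  refine hc.le_of_forall_exists_adj 3 fun t h3 hk => ?_
  by_cases htr : t = r
  · exact ⟨.xc i j, G1_adj_of_grel (by simp [grel, encOK]; omega), hu.trans htr.symm⟩
  · exact ⟨.y ⟨t, h3, hk⟩, G1_adj_of_grel (by simp [grel, encOK]; omega), hy _⟩

/-- `a`, `(1, 0)`, `(1, 1)` use all of `{1, 2, 3}`, and `v` avoids the last two; likewise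
for `w`. -/
theorem z_eq_xc_of_xc_le_three (hc : IsProperKColoring (G1 m k) k c) (hy : IsYRainbow c)
    (i : Fin m) (j : Yk k) (ha : c (.xc i j) ≤ 3) :
    c (.z i j.predZc) = c (.xc i j) ∧ c (.z i j.toZc) = c (.xc i j) := by
  have hpiece : ∀ t < 4, 1 ≤ c (.ei i j (1, t)) ∧ c (.ei i j (1, t)) ≤ 3 := fun t ht =>
    ⟨hc.one_le _, hc.le_three_of_forall_grel_y hy fun t' => by
      have := t'.2; simp [grel, encOK, ht]; omega⟩
  have := hpiece 0 (by norm_num); have := hpiece 1 (by norm_num)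
  have := hpiece 2 (by norm_num); have := hpiece 3 (by norm_num)
  have := hc.one_le (.xc i j)
  have := hc.z_le_three hy i j.predZc; have := hc.one_le (.z i j.predZc)
  have := hc.z_le_three hy i j.toZc; have := hc.one_le (.z i j.toZc)
  have : c (.ei i j (1, 0)) ≠ c (.ei i j (1, 1)) ∧ c (.ei i j (1, 2)) ≠ c (.ei i j (1, 3)) ∧
      c (.xc i j) ≠ c (.ei i j (1, 0)) ∧ c (.xc i j) ≠ c (.ei i j (1, 1)) ∧
      c (.xc i j) ≠ c (.ei i j (1, 2)) ∧ c (.xc i j) ≠ c (.ei i j (1, 3)) ∧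
      c (.z i j.predZc) ≠ c (.ei i j (1, 0)) ∧ c (.z i j.predZc) ≠ c (.ei i j (1, 1)) ∧
      c (.z i j.toZc) ≠ c (.ei i j (1, 2)) ∧ c (.z i j.toZc) ≠ c (.ei i j (1, 3)) := by
    refine ⟨?_, ?_, ?_, ?_, ?_, ?_, ?_, ?_, ?_, ?_⟩ <;>
      exact hc.ne_of_grel (by simp [grel, encOK, Yk.predZc, Yk.toZc])
  omega

/-- The triangle `u', w₁, w₂` uses all of `{1, 2, 3}`, so `w` gets the colour of `u'`,
which `v` avoids. -/
theorem z_pred_ne_z_of_xc_eq (hc : IsProperKColoring (G1 m k) k c) (hy : IsYRainbow c)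
    (i : Fin m) (j : Yk k) (ha : c (.xc i j) = j.1) : c (.z i j.predZc) ≠ c (.z i j.toZc) := by
  have hj := j.2
  have hpiece : ∀ t, 1 ≤ t → t < 3 → 1 ≤ c (.ei i j (j.1, t)) ∧ c (.ei i j (j.1, t)) ≤ 3 :=
    fun t ht1 ht3 => ⟨hc.one_le _, hc.le_three_of_forall_grel_y hy fun _ => by
      simp [grel, encOK]; omega⟩
  have := hpiece 1 (by norm_num) (by norm_num); have := hpiece 2 (by norm_num) (by norm_num)
  have := hc.ei_zero_le_three hy hj.1 hj.2 ha; have := hc.one_le (.ei i j (j.1, 0))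
  have := hc.z_le_three hy i j.toZc; have := hc.one_le (.z i j.toZc)
  have : c (.ei i j (j.1, 0)) ≠ c (.ei i j (j.1, 1)) ∧
      c (.ei i j (j.1, 0)) ≠ c (.ei i j (j.1, 2)) ∧
      c (.ei i j (j.1, 1)) ≠ c (.ei i j (j.1, 2)) ∧
      c (.z i j.predZc) ≠ c (.ei i j (j.1, 0)) ∧
      c (.z i j.toZc) ≠ c (.ei i j (j.1, 1)) ∧ c (.z i j.toZc) ≠ c (.ei i j (j.1, 2)) := by
    refine ⟨?_, ?_, ?_, ?_, ?_, ?_⟩ <;>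
      exact hc.ne_of_grel (by simp [grel, encOK, Yk.predZc, Yk.toZc]; omega)
  omega

/-- `u'` with either pair `v₁ v₂`, `w₁ w₂` uses all of `{1, 2, 3}`, so `v` and `w` both get
the colour of `u'`. -/
theorem z_pred_eq_z_of_xc_ne (hc : IsProperKColoring (G1 m k) k c) (hy : IsYRainbow c)
    (i : Fin m) (j : Yk k) (ha : 4 ≤ c (.xc i j)) (haj : c (.xc i j) ≠ j.1) :
    c (.z i j.predZc) = c (.z i j.toZc) := by
  set r := c (.xc i j) with hr
  have hrk := (mem_Icc.1 (hc.1 (.xc i j))).2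
  have hpiece : ∀ t, 1 ≤ t → t < 5 → 1 ≤ c (.ei i j (r, t)) ∧ c (.ei i j (r, t)) ≤ 3 :=
    fun t ht1 ht5 => ⟨hc.one_le _, hc.le_three_of_forall_grel_y hy fun _ => by
      simp [grel, encOK]; omega⟩
  have := hpiece 1 (by norm_num) (by norm_num); have := hpiece 2 (by norm_num) (by norm_num)
  have := hpiece 3 (by norm_num) (by norm_num); have := hpiece 4 (by norm_num) (by norm_num)
  have := hc.ei_zero_le_three hy ha hrk hr.symm; have := hc.one_le (.ei i j (r, 0))
  have := hc.z_le_three hy i j.predZc; have := hc.one_le (.z i j.predZc)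
  have := hc.z_le_three hy i j.toZc; have := hc.one_le (.z i j.toZc)
  have : c (.ei i j (r, 0)) ≠ c (.ei i j (r, 1)) ∧ c (.ei i j (r, 0)) ≠ c (.ei i j (r, 2)) ∧
      c (.ei i j (r, 0)) ≠ c (.ei i j (r, 3)) ∧ c (.ei i j (r, 0)) ≠ c (.ei i j (r, 4)) ∧
      c (.ei i j (r, 1)) ≠ c (.ei i j (r, 2)) ∧ c (.ei i j (r, 3)) ≠ c (.ei i j (r, 4)) ∧
      c (.z i j.predZc) ≠ c (.ei i j (r, 1)) ∧ c (.z i j.predZc) ≠ c (.ei i j (r, 2)) ∧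
      c (.z i j.toZc) ≠ c (.ei i j (r, 3)) ∧ c (.z i j.toZc) ≠ c (.ei i j (r, 4)) := by
    refine ⟨?_, ?_, ?_, ?_, ?_, ?_, ?_, ?_, ?_, ?_⟩ <;>
      exact hc.ne_of_grel (by simp [grel, encOK, Yk.predZc, Yk.toZc]; omega)
  omega

end IsProperKColoring

/-- The colourings `u ↦ a`, `v ↦ v`, `w ↦ w` that extend to
`F_{enc,s,k}(u, v, w; y₄, …, y_k)`. -/
def EncSpec (s a v w : ℕ) : Prop :=
  (1 ≤ a ∧ a ≤ 3 ∧ v = a ∧ w = a) ∨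
    (a = s ∧ 1 ≤ v ∧ v ≤ 3 ∧ 1 ≤ w ∧ w ≤ 3 ∧ v ≠ w) ∨
    (4 ≤ a ∧ a ≠ s ∧ 1 ≤ v ∧ v ≤ 3 ∧ v = w)

theorem IsProperKColoring.encSpec {c : GV m k → ℕ} (hc : IsProperKColoring (G1 m k) k c)
    (hy : IsYRainbow c) (i : Fin m) (j : Yk k) :
    EncSpec j.1 (c (.xc i j)) (c (.z i j.predZc)) (c (.z i j.toZc)) := by
  have := hc.one_le (.xc i j)
  have := hc.z_le_three hy i j.predZc; have := hc.one_le (.z i j.predZc)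
  have := hc.z_le_three hy i j.toZc; have := hc.one_le (.z i j.toZc)
  rcases le_or_gt (c (.xc i j)) 3 with ha | ha
  · exact Or.inl ⟨by omega, ha, hc.z_eq_xc_of_xc_le_three hy i j ha⟩
  by_cases haj : c (.xc i j) = j.1
  · exact Or.inr <| Or.inl ⟨haj, by omega, by omega, by omega, by omega,
      hc.z_pred_ne_z_of_xc_eq hy i j haj⟩
  · exact Or.inr <| Or.inr ⟨ha, haj, by omega, by omega, hc.z_pred_eq_z_of_xc_ne hy i j ha haj⟩

theorem Zc.exists_eq_predZc_or_eq_toZc (hk : 4 ≤ k) (jz : Zc k) :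
    ∃ j : Yk k, jz = j.predZc ∨ jz = j.toZc := by
  by_cases h3 : jz.1 = 3
  · exact ⟨⟨4, le_rfl, hk⟩, Or.inl (Subtype.ext h3)⟩
  · exact ⟨⟨jz.1, by have := jz.2; omega, jz.2.2⟩, Or.inr rfl⟩

theorem Zc.eq_of_forall_step {g : Zc k → ℕ} {P : ℕ → Prop}
    (hstep : ∀ j : Yk k, P j.1 → g j.predZc = g j.toZc) {p q : Zc k} (hpq : p.1 ≤ q.1)
    (hP : ∀ n, p.1 < n → n ≤ q.1 → P n) : g p = g q := by
  obtain ⟨d, hd⟩ := Nat.exists_eq_add_of_le hpq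
  induction d generalizing q with
  | zero => exact congrArg g (Subtype.ext hd.symm)
  | succ d ih =>
    let j : Yk k := ⟨q.1, by have := p.2; omega, q.2.2⟩
    have hj : j.predZc.1 + 1 = q.1 := by simp only [j, Yk.predZc]; omega
    calc g p = g j.predZc := ih (by omega) (fun n h1 h2 => hP n h1 (by omega)) (by omega)
      _ = g q := hstep j (hP q.1 (by omega) le_rfl)

theorem mem_Icc_of_forall_encSpec {a : ℕ} {g : Zc k → ℕ} (hk : 4 ≤ k)
    (hg : ∀ j : Yk k, EncSpec j.1 a (g j.predZc) (g j.toZc)) (jz : Zc k) :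
    g jz ∈ Icc 1 3 := by
  obtain ⟨j, rfl | rfl⟩ := Zc.exists_eq_predZc_or_eq_toZc hk jz <;>
    · have hspec := hg j
      unfold EncSpec at hspec
      rw [mem_Icc]
      omega

def RowCondition (k a : ℕ) (g : Zc k → ℕ) : Prop :=
  (a ∈ ({1, 2, 3} : Set ℕ) → ∀ jz : Zc k, g jz = a) ∧
    (a ∈ Finset.Icc 4 k →
      (∀ jz : Zc k, g jz ∈ ({1, 2, 3} : Set ℕ)) ∧
      (∀ jz jz' : Zc k, jz.1 < a → jz'.1 < a → g jz = g jz') ∧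
      (∀ jz jz' : Zc k, a ≤ jz.1 → a ≤ jz'.1 → g jz = g jz') ∧
      (∀ jz jz' : Zc k, jz.1 < a → a ≤ jz'.1 → g jz ≠ g jz'))

theorem rowCondition_of_forall_encSpec {a : ℕ} {g : Zc k → ℕ} (hk : 4 ≤ k) (hak : a ≤ k)
    (hg : ∀ j : Yk k, EncSpec j.1 a (g j.predZc) (g j.toZc)) : RowCondition k a g := by
  refine ⟨fun ha jz => ?_, fun ha => ?_⟩
  · simp only [Set.mem_insert_iff, Set.mem_singleton_iff] at ha
    obtain ⟨j, rfl | rfl⟩ := Zc.exists_eq_predZc_or_eq_toZc hk jz <;>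
    · have hspec := hg j
      have := j.2
      unfold EncSpec at hspec
      omega
  obtain ⟨ha4, -⟩ := mem_Icc.1 ha
  have hstep (j : Yk k) (hja : j.1 ≠ a) : g j.predZc = g j.toZc := by
    have hspec := hg j
    unfold EncSpec at hspec
    omega
  let z₃ : Zc k := ⟨3, le_rfl, by omega⟩
  let zₐ : Zc k := ⟨a, by omega, hak⟩
  have hbelow (jz : Zc k) (h : jz.1 < a) : g z₃ = g jz :=
    Zc.eq_of_forall_step (P := (· ≠ a)) hstep jz.2.1 fun _ _ hn => by omega
  have habove (jz : Zc k) (h : a ≤ jz.1) : g zₐ = g jz :=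
    Zc.eq_of_forall_step (P := (· ≠ a)) hstep h fun _ hn _ => (show a < _ from hn).ne'
  refine ⟨fun jz => ?_, fun jz jz' h h' => (hbelow jz h).symm.trans (hbelow jz' h'),
    fun jz jz' h h' => (habove jz h).symm.trans (habove jz' h'), fun jz jz' h h' => ?_⟩
  · have := mem_Icc.1 (mem_Icc_of_forall_encSpec hk hg jz)
    simp only [Set.mem_insert_iff, Set.mem_singleton_iff]
    omega
  · let j : Yk k := ⟨a, ha4, hak⟩
    rw [← hbelow jz h, ← habove jz' h', hbelow j.predZc (by simp only [j, Yk.predZc]; omega),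
      habove j.toZc le_rfl]
    have hja : j.1 = a := rfl
    have hspec := hg j
    unfold EncSpec at hspec
    omega

theorem forall_encSpec_of_rowCondition {a : ℕ} {g : Zc k → ℕ} (ha1 : 1 ≤ a) (hak : a ≤ k)
    (hg : RowCondition k a g) (j : Yk k) : EncSpec j.1 a (g j.predZc) (g j.toZc) := by
  obtain ⟨hlow, hhigh⟩ := hg
  have hj := j.2
  have hp : j.predZc.1 = j.1 - 1 := rfl
  have ht : j.toZc.1 = j.1 := rfl
  rcases le_or_gt a 3 with ha3 | ha4
  · have ha : a ∈ ({1, 2, 3} : Set ℕ) := by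
      simp only [Set.mem_insert_iff, Set.mem_singleton_iff]
      omega
    exact Or.inl ⟨ha1, ha3, hlow ha _, hlow ha _⟩
  obtain ⟨h13, hlo, hhi, hne⟩ := hhigh (mem_Icc.2 ⟨ha4, hak⟩)
  have hv := h13 j.predZc
  have hw := h13 j.toZc
  simp only [Set.mem_insert_iff, Set.mem_singleton_iff] at hv hw
  by_cases haj : a = j.1
  · exact Or.inr <| Or.inl ⟨haj, by omega, by omega, by omega, by omega,
      hne _ _ (by omega) (by omega)⟩
  · have hvw : g j.predZc = g j.toZc := by
      rcases lt_or_gt_of_ne haj with h | h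
      · exact hhi _ _ (by omega) (by omega)
      · exact hlo _ _ (by omega) (by omega)
    exact Or.inr <| Or.inr ⟨ha4, haj, by omega, by omega, hvw⟩

def other₁ (x : ℕ) : ℕ := if x = 1 then 2 else 1

def other₂ (x : ℕ) : ℕ := if x = 3 then 2 else 3

theorem other_spec (x : ℕ) :
    1 ≤ other₁ x ∧ other₁ x < other₂ x ∧ other₂ x ≤ 3 ∧ other₁ x ≠ x ∧ other₂ x ≠ x := by
  unfold other₁ other₂
  split_ifs <;> omega

/-- A colour for the internal vertex `p` of `F_{enc,s,k}(u, v, w; y₄, …, y_k)` extending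
`u ↦ a`, `v ↦ v`, `w ↦ w`: the pair attached to `v` (to `w`) takes the two colours of
`{1, 2, 3}` other than `v` (`w`), and the vertex `u'` of `F_r`, `r ≥ 4`, takes colour `r`
unless `u` already has it. -/
def encColor (s a v w : ℕ) (p : ℕ × ℕ) : ℕ :=
  if p.1 = 1 then
    if p.2 = 0 then other₁ v else if p.2 = 1 then other₂ v else if p.2 = 2 then other₁ w
    else other₂ w
  else if p.1 = s then
    if p.2 = 0 then (if a = s then w else s) else if p.2 = 1 then other₁ w else other₂ w
  else
    if p.2 = 0 then (if a = p.1 then v else p.1)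
    else if p.2 = 1 then other₁ v else if p.2 = 2 then other₂ v
    else if p.2 = 3 then other₁ w else other₂ w

section encColor

variable {k s a v w : ℕ} {p : ℕ × ℕ}

theorem encColor_mem (hs : 4 ≤ s ∧ s ≤ k) (hspec : EncSpec s a v w) (hp : encOK k s p) :
    encColor s a v w p ∈ Icc 1 k := by
  have := other_spec v; have := other_spec w
  unfold EncSpec at hspec; unfold encOK at hp; unfold encColor
  rw [mem_Icc]
  split_ifs <;> omega

theorem encColor_ne_y {t : ℕ} (ht : 4 ≤ t) (hspec : EncSpec s a v w) (hp : encOK k s p)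
    (hpt : ¬(p.1 = t ∧ p.2 = 0)) : encColor s a v w p ≠ t := by
  have := other_spec v; have := other_spec w
  unfold EncSpec at hspec; unfold encOK at hp; unfold encColor
  split_ifs <;> omega

theorem encColor_ne_u (hs : 4 ≤ s) (hspec : EncSpec s a v w) (hp : encOK k s p)
    (hpu : p.1 = 1 ∨ (p.1 = s ∧ p.2 = 0) ∨ (4 ≤ p.1 ∧ p.1 ≠ s ∧ p.2 = 0)) :
    a ≠ encColor s a v w p := by
  have := other_spec v; have := other_spec w
  unfold EncSpec at hspec; unfold encOK at hp; unfold encColor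
  split_ifs <;> omega

theorem encColor_ne_v (hs : 4 ≤ s) (hspec : EncSpec s a v w) (hp : encOK k s p)
    (hpv : (p.1 = 1 ∧ p.2 < 2) ∨ (p.1 = s ∧ p.2 = 0) ∨
      (4 ≤ p.1 ∧ p.1 ≠ s ∧ (p.2 = 1 ∨ p.2 = 2))) :
    v ≠ encColor s a v w p := by
  have := other_spec v; have := other_spec w
  unfold EncSpec at hspec; unfold encOK at hp; unfold encColor
  split_ifs <;> omega

theorem encColor_ne_w (hs : 4 ≤ s)
    (hpw : (p.1 = 1 ∧ 2 ≤ p.2) ∨ (p.1 = s ∧ p.2 ≠ 0) ∨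
      (4 ≤ p.1 ∧ p.1 ≠ s ∧ (p.2 = 3 ∨ p.2 = 4))) :
    w ≠ encColor s a v w p := by
  have := other_spec v; have := other_spec w
  unfold encColor
  split_ifs <;> omega

theorem encColor_ne_encColor {q : ℕ × ℕ} (hs : 4 ≤ s) (hspec : EncSpec s a v w)
    (hpq : p.1 = q.1)
    (hedge : (p.1 = 1 ∧ (p.2, q.2) ∈ ([(0,1),(2,3)] : List (ℕ × ℕ)))
      ∨ (p.1 = s ∧ (p.2, q.2) ∈ ([(0,1),(0,2),(1,2)] : List (ℕ × ℕ)))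
      ∨ (4 ≤ p.1 ∧ p.1 ≠ s ∧
          (p.2, q.2) ∈ ([(0,1),(0,2),(0,3),(0,4),(1,2),(3,4)] : List (ℕ × ℕ)))) :
    encColor s a v w p ≠ encColor s a v w q := by
  obtain ⟨r, t⟩ := p
  obtain ⟨r', t'⟩ := q
  obtain rfl : r = r' := hpq
  have := other_spec v; have := other_spec w
  unfold EncSpec at hspec
  simp only [List.mem_cons, List.not_mem_nil, Prod.mk.injEq, or_false] at hedge
  rcases hedge with ⟨rfl, h⟩ | ⟨rfl, h⟩ | ⟨hr4, hrs, h⟩ <;>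
    rcases h with ⟨rfl, rfl⟩ | ⟨rfl, rfl⟩ | ⟨rfl, rfl⟩ | ⟨rfl, rfl⟩ | ⟨rfl, rfl⟩ | ⟨rfl, rfl⟩ <;>
    simp [encColor] <;> (try split_ifs) <;> omega

end encColor

/-- Maps `{2, …, k}` bijectively onto `[k] \ {a}`. -/
def copyColor (a b : ℕ) : ℕ := if b ≤ a then b - 1 else b

instance (k s : ℕ) (p : ℕ × ℕ) : Decidable (encOK k s p) := by
  unfold encOK
  infer_instance

/-- The vertices `.ei i j p` with `¬ encOK k j p` are isolated junk; they get colour `1`. -/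
def extColoring (h : GV m k → ℕ) : GV m k → ℕ
  | .x i => h (.x i)
  | .y t => h (.y t)
  | .z i jz => h (.z i jz)
  | .xc i _ => h (.x i)
  | .ci i _ b => copyColor (h (.x i)) b.1
  | .ei i j p =>
      if encOK k j.1 p then encColor j.1 (h (.x i)) (h (.z i j.predZc)) (h (.z i j.toZc)) p
      else 1

section extColoring

variable {h : GV m k → ℕ}

theorem extColoring_ne_of_grel (hy : IsYRainbow h)
    (hspec : ∀ i (j : Yk k), EncSpec j.1 (h (.x i)) (h (.z i j.predZc)) (h (.z i j.toZc)))
    {u v : GV m k} (huv : grel m k u v) : extColoring h u ≠ extColoring h v := by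
  cases u <;> cases v <;> try exact huv.elim
  case x.ci i i' j b =>
    obtain rfl : i = i' := huv
    have := b.2
    simp only [extColoring, copyColor]
    split_ifs <;> omega
  case xc.ci i j i' j' b =>
    obtain ⟨rfl, rfl⟩ := huv
    have := b.2
    simp only [extColoring, copyColor]
    split_ifs <;> omega
  case ci.ci i j b i' j' b' =>
    obtain ⟨rfl, rfl, hb⟩ := huv
    have := b.2; have := b'.2
    have : b.1 ≠ b'.1 := fun h => hb (Subtype.ext h)
    simp only [extColoring, copyColor]
    split_ifs <;> omega
  case y.z t i jz =>
    have := t.2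
    have := mem_Icc.1 <| mem_Icc_of_forall_encSpec (g := fun jz => h (.z i jz))
      (t.2.1.trans t.2.2) (hspec i) jz
    simp only [extColoring, hy t]
    omega
  case y.ei t i j p =>
    obtain ⟨hp, hpt⟩ := huv
    simp only [extColoring, hy t, if_pos hp]
    exact (encColor_ne_y t.2.1 (hspec i j) hp hpt).symm
  case xc.ei i j i' j' p =>
    obtain ⟨rfl, rfl, hp, hpu⟩ := huv
    simp only [extColoring, if_pos hp]
    exact encColor_ne_u j.2.1 (hspec i j) hp hpu
  case z.ei i jz i' j p =>
    obtain ⟨rfl, hp, ⟨hjz, hpv⟩ | ⟨hjz, hpw⟩⟩ := huv <;> simp only [extColoring, if_pos hp]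
    · obtain rfl : jz = j.predZc := Subtype.ext hjz
      exact encColor_ne_v j.2.1 (hspec i j) hp hpv
    · obtain rfl : jz = j.toZc := Subtype.ext hjz
      exact encColor_ne_w j.2.1 hpw
  case ei.ei i j p i' j' q =>
    obtain ⟨rfl, rfl, hp, hq, hpq, hedge⟩ := huv
    simp only [extColoring, if_pos hp, if_pos hq]
    exact encColor_ne_encColor j.2.1 (hspec i j) hpq hedge

theorem isProperKColoring_extColoring (hk : 4 ≤ k) (hX : ∀ i, h (.x i) ∈ Icc 1 k)
    (hy : IsYRainbow h)
    (hspec : ∀ i (j : Yk k), EncSpec j.1 (h (.x i)) (h (.z i j.predZc)) (h (.z i j.toZc))) :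
    IsProperKColoring (G1 m k) k (extColoring h) := by
  refine ⟨fun v => ?_, fun u v huv => ?_⟩
  · cases v with
    | x i | xc i _ => exact hX i
    | y t => simpa only [extColoring, hy t, mem_Icc] using ⟨by have := t.2; omega, t.2.2⟩
    | z i jz =>
      have := mem_Icc.1 <|
        mem_Icc_of_forall_encSpec (g := fun jz => h (.z i jz)) hk (hspec i) jz
      simp only [extColoring, mem_Icc]
      omega
    | ci i j b =>
      have := b.2; have := mem_Icc.1 (hX i)
      simp only [extColoring, copyColor, mem_Icc]
      split_ifs <;> omega
    | ei i j p =>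
      simp only [extColoring]
      split_ifs with hp
      · exact encColor_mem j.2 (hspec i j) hp
      · simp only [mem_Icc]
        omega
  · obtain ⟨-, huv | huv⟩ := (SimpleGraph.fromRel_adj _ _ _).1 huv
    · exact extColoring_ne_of_grel hy hspec huv
    · exact (extColoring_ne_of_grel hy hspec huv).symm

end extColoring

end

theorem G1_extension_general (m k : ℕ) (hk : 4 ≤ k) (h : GV m k → ℕ)
    (hX : ∀ i, h (.x i) ∈ Finset.Icc 1 k)
    (hrainbow : ∀ j : Yk k, h (.y j) = j.1) :
    (∃ c : GV m k → ℕ, IsProperKColoring (G1 m k) k c ∧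
        (∀ i, c (.x i) = h (.x i)) ∧ (∀ j : Yk k, c (.y j) = h (.y j)) ∧
        (∀ i, ∀ jz : Zc k, c (.z i jz) = h (.z i jz))) ↔
      ∀ i : Fin m,
        (h (.x i) ∈ ({1, 2, 3} : Set ℕ) → ∀ jz : Zc k, h (.z i jz) = h (.x i)) ∧
        (h (.x i) ∈ Finset.Icc 4 k →
          (∀ jz : Zc k, h (.z i jz) ∈ ({1, 2, 3} : Set ℕ)) ∧
          (∀ jz jz' : Zc k, jz.1 < h (.x i) → jz'.1 < h (.x i) →
            h (.z i jz) = h (.z i jz')) ∧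
          (∀ jz jz' : Zc k, h (.x i) ≤ jz.1 → h (.x i) ≤ jz'.1 →
            h (.z i jz) = h (.z i jz')) ∧
          (∀ jz jz' : Zc k, jz.1 < h (.x i) → h (.x i) ≤ jz'.1 →
            h (.z i jz) ≠ h (.z i jz'))) := by
  constructor
  · rintro ⟨c, hc, hcx, hcy, hcz⟩ i
    refine rowCondition_of_forall_encSpec hk (mem_Icc.1 (hX i)).2 fun j => ?_
    have := hc.encSpec (fun t => (hcy t).trans (hrainbow t)) i j
    rwa [hc.xc_eq_x, hcx, hcz, hcz] at this
  · intro hrow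
    have hspec i := forall_encSpec_of_rowCondition (mem_Icc.1 (hX i)).1 (mem_Icc.1 (hX i)).2
      (hrow i)
    exact ⟨extColoring h, isProperKColoring_extColoring hk hX hrainbow hspec,
      fun _ => rfl, fun _ => rfl, fun _ _ => rfl⟩

/-- A `Y`-rainbow function `h : X ∪ Y ∪ Z → [k]` extends to a proper
`k`-coloring of `G₁` iff for each `i ∈ [m]`: if `h xᵢ ∈ {1,2,3}` then
`h` is constantly `h xᵢ` on the row `z_{i,3},…,z_{i,k}`, and if
`h xᵢ = s ∈ {4,…,k}` then on that row `h` takes values in `{1,2,3}`, is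
constant on the columns `j < s` and on the columns `j ≥ s`, and these two
values differ. -/
theorem G1_extension (m k : ℕ) (hk : 4 ≤ k) (h : GV m k → ℕ)
    (hX : ∀ i, h (.x i) ∈ Finset.Icc 1 k)
    (hY : ∀ j : Yk k, h (.y j) ∈ Finset.Icc 1 k)
    (hZ : ∀ i, ∀ jz : Zc k, h (.z i jz) ∈ Finset.Icc 1 k)
    (hrainbow : ∀ j : Yk k, h (.y j) = j.1) :
    (∃ c : GV m k → ℕ, IsProperKColoring (G1 m k) k c ∧
        (∀ i, c (.x i) = h (.x i)) ∧ (∀ j : Yk k, c (.y j) = h (.y j)) ∧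
        (∀ i, ∀ jz : Zc k, c (.z i jz) = h (.z i jz))) ↔
      ∀ i : Fin m,
        (h (.x i) ∈ ({1, 2, 3} : Set ℕ) → ∀ jz : Zc k, h (.z i jz) = h (.x i)) ∧
        (h (.x i) ∈ Finset.Icc 4 k →
          (∀ jz : Zc k, h (.z i jz) ∈ ({1, 2, 3} : Set ℕ)) ∧
          (∀ jz jz' : Zc k, jz.1 < h (.x i) → jz'.1 < h (.x i) →
            h (.z i jz) = h (.z i jz')) ∧
          (∀ jz jz' : Zc k, h (.x i) ≤ jz.1 → h (.x i) ≤ jz'.1 →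
            h (.z i jz) = h (.z i jz')) ∧
          (∀ jz jz' : Zc k, jz.1 < h (.x i) → h (.x i) ≤ jz'.1 →
            h (.z i jz) ≠ h (.z i jz'))) :=
  G1_extension_general m k hk h hX hrainbow
end

section
/- Let G₀ be X-rooted-K₄-minor-free and K₅-minor-free, and let G be obtained from G₀ by adding t new vertices, pairwise adjacent and each adjacent to all vertices of G₀, where the new vertices are not in X. Then G is X-rooted-K_{4+t}-minor-free and K_{5+t}-minor-free. -/
/-- The graph obtained from `G` by adding `t` new vertices, pairwise adjacent
and each adjacent to all vertices of `G`. -/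
def addUniversal {V : Type*} (G : SimpleGraph V) (t : ℕ) : SimpleGraph (V ⊕ Fin t) :=
  SimpleGraph.fromRel (fun x y =>
    (∃ a b, x = Sum.inl a ∧ y = Sum.inl b ∧ G.Adj a b) ∨
    ((x.isRight ∨ y.isRight) ∧ x ≠ y))

lemma addUniversal_adj_inl {V : Type*} {G : SimpleGraph V} {t : ℕ} {a b : V} :
    (addUniversal G t).Adj (Sum.inl a) (Sum.inl b) ↔ G.Adj a b := by
  constructor
  · rintro ⟨hne, h | h⟩
    · rcases h with ⟨c, d, hc, hd, hadj⟩ | ⟨h, _⟩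
      · cases hc; cases hd; exact hadj
      · simp at h
    · rcases h with ⟨c, d, hc, hd, hadj⟩ | ⟨h, _⟩
      · cases hc; cases hd; exact hadj.symm
      · simp at h
  · intro h
    exact ⟨by simpa using h.ne, Or.inl (Or.inl ⟨a, b, rfl, rfl, h⟩)⟩

lemma connected_induce_of_inl {V : Type*} {G : SimpleGraph V} {t : ℕ} {S : Set V}
    (h : ((addUniversal G t).induce (Sum.inl '' S)).Connected) :
    (G.induce S).Connected := by
  have iso : G.induce S ≃g (addUniversal G t).induce (Sum.inl '' S) :=
    { toEquiv := Equiv.Set.image Sum.inl S Sum.inl_injective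
      map_rel_iff' := by
        intro a b
        simp only [Equiv.Set.image, Equiv.Set.imageOfInjOn, Equiv.coe_fn_mk,
          SimpleGraph.comap_adj, Function.Embedding.coe_subtype]
        exact addUniversal_adj_inl }
  exact iso.connected_iff.mpr h

/-- From a model of `K_{m+t}` in `addUniversal G t`, extract `m` branch sets
avoiding all new vertices. -/
lemma exists_inl_branch {V : Type*} {t m : ℕ}
    (μ : Fin (m + t) → Set (V ⊕ Fin t))
    (hdisj : ∀ i j, i ≠ j → Disjoint (μ i) (μ j)) :
    ∃ e : Fin m → Fin (m + t), Function.Injective e ∧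
      ∀ k r, Sum.inr r ∉ μ (e k) := by
  classical
  set S : Finset (Fin (m + t)) := Finset.univ.filter (fun i => ∃ r, Sum.inr r ∈ μ i) with hS
  have hcard : S.card ≤ t := by
    have : ∀ i ∈ S, ∃ r : Fin t, Sum.inr r ∈ μ i := by
      intro i hi; simpa [hS] using hi
    choose f hf using this
    have hinj : Function.Injective (fun i : {i // i ∈ S} => f i.1 i.2) := by
      intro i j hij
      by_contra hne
      have hne' : i.1 ≠ j.1 := fun h => hne (Subtype.ext h)
      have := hdisj i.1 j.1 hne'
      exact (this.ne_of_mem (hf i.1 i.2) (by simp only at hij; rw [hij]; exact hf j.1 j.2)) rfl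
    calc S.card = Fintype.card {i // i ∈ S} := (Fintype.card_coe S).symm
      _ ≤ Fintype.card (Fin t) := Fintype.card_le_of_injective _ hinj
      _ = t := by simp
  have hcompl : m ≤ Sᶜ.card := by
    have h4 : Sᶜ.card = (m + t) - S.card := by simp [Finset.card_compl]
    omega
  have : Nonempty (Fin m ↪ (Sᶜ : Finset (Fin (m+t)))) := by
    apply Function.Embedding.nonempty_of_card_le
    simp only [Fintype.card_fin, Fintype.card_coe]
    exact hcompl
  obtain ⟨g⟩ := this
  refine ⟨fun k => (g k).1, fun a b hab => g.injective (Subtype.ext hab), ?_⟩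
  intro k r hr
  have hmem := (g k).2
  rw [Finset.mem_compl] at hmem
  exact hmem (Finset.mem_filter.mpr ⟨Finset.mem_univ _, ⟨r, hr⟩⟩)

lemma branch_eq_image {V : Type*} {t : ℕ} {T : Set (V ⊕ Fin t)}
    (h : ∀ r, Sum.inr r ∉ T) :
    T = Sum.inl '' {v | Sum.inl v ∈ T} := by
  ext x
  cases x with
  | inl v => simp
  | inr r => simpa using h r

/-- If `G₀` is `X`-rooted-`K₄`-minor-free and `K₅`-minor-free, then the graph
obtained by adding `t` pairwise adjacent universal vertices (none of them in
`X`) is `X`-rooted-`K_{4+t}`-minor-free and `K_{5+t}`-minor-free. -/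
theorem addUniversal_rooted_minor_free {V : Type*} (G₀ : SimpleGraph V)
    (X : Set V) (t : ℕ)
    (hroot : ¬ HasRootedCliqueMinor G₀ X 4) (hm : ¬ HasCliqueMinor G₀ 5) :
    ¬ HasRootedCliqueMinor (addUniversal G₀ t) (Sum.inl '' X) (4 + t) ∧
      ¬ HasCliqueMinor (addUniversal G₀ t) (5 + t) := by
  constructor
  · rintro ⟨μ, h1, h2, h3⟩
    obtain ⟨e, he, hinl⟩ := exists_inl_branch μ h2
    apply hroot
    refine ⟨fun k => {v | Sum.inl v ∈ μ (e k)}, fun k => ⟨?_, ?_⟩, ?_, ?_⟩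
    · obtain ⟨x, hxμ, hxX⟩ := (h1 (e k)).1
      obtain ⟨v, hv, rfl⟩ := hxX
      exact ⟨v, hxμ, hv⟩
    · apply connected_induce_of_inl (G := G₀) (t := t)
      rw [← branch_eq_image (hinl k)]
      exact (h1 (e k)).2
    · intro i j hij
      rw [Set.disjoint_left]
      intro v hvi hvj
      exact Set.disjoint_left.mp (h2 (e i) (e j) (fun h => hij (he h))) hvi hvj
    · intro i j hij
      obtain ⟨a, ha, b, hb, hab⟩ := h3 (e i) (e j) (fun h => hij (he h))
      cases a with
      | inr r => exact absurd ha (hinl i r)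
      | inl a =>
        cases b with
        | inr r => exact absurd hb (hinl j r)
        | inl b => exact ⟨a, ha, b, hb, addUniversal_adj_inl.mp hab⟩
  · rintro ⟨μ, h1, h2, h3⟩
    obtain ⟨e, he, hinl⟩ := exists_inl_branch μ h2
    apply hm
    refine ⟨fun k => {v | Sum.inl v ∈ μ (e k)}, fun k => ⟨?_, ?_⟩, ?_, ?_⟩
    · obtain ⟨x, hxμ⟩ := (h1 (e k)).1
      cases x with
      | inr r => exact absurd hxμ (hinl k r)
      | inl v => exact ⟨v, hxμ⟩
    · apply connected_induce_of_inl (G := G₀) (t := t)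
      rw [← branch_eq_image (hinl k)]
      exact (h1 (e k)).2
    · intro i j hij
      rw [Set.disjoint_left]
      intro v hvi hvj
      exact Set.disjoint_left.mp (h2 (e i) (e j) (fun h => hij (he h))) hvi hvj
    · intro i j hij
      obtain ⟨a, ha, b, hb, hab⟩ := h3 (e i) (e j) (fun h => hij (he h))
      cases a with
      | inr r => exact absurd ha (hinl i r)
      | inl a =>
        cases b with
        | inr r => exact absurd hb (hinl j r)
        | inl b => exact ⟨a, ha, b, hb, addUniversal_adj_inl.mp hab⟩
end

section
/- Let k ≥ 4, s ∈ {4,…,k}, and let f be a function on {u,v,w,y₄,…,y_k} with f(y_i)=i for all i, such that f extends to a proper k-coloring of the gadget F_{enc,s,k}(u,v,w;y₄,…,y_k). Then f(v), f(w) ∈ {1,2,3}. -/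
lemma IsProperKColoring.lt_of_forall_color_mem_nbhd {V : Type*} {G : SimpleGraph V} {k : ℕ}
    {c : V → ℕ} (hc : IsProperKColoring G k c) {x : V} {m : ℕ}
    (hnbhd : ∀ j, m ≤ j → j ≤ k → ∃ y, G.Adj x y ∧ c y = j) : c x < m := by
  by_contra! hm
  obtain ⟨y, hxy, hy⟩ := hnbhd (c x) hm (Finset.mem_Icc.mp (hc.1 x)).2
  exact hc.2 hxy hy.symm

lemma Fenc_adj_y {k s : ℕ} {a : Fin 3} (ha : a ≠ 0) (y : Yk k) :
    (Fenc k s).Adj (.inl a) (.inr (.inl y)) :=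
  (SimpleGraph.fromRel_adj _ _ _).mpr ⟨Sum.inl_ne_inr, Or.inl ha⟩

theorem Fenc_forces_vw_colors_general (k s : ℕ)
    (f : EV k s → ℕ)
    (hfy : ∀ y : Yk k, f (.inr (.inl y)) = y.1)
    (hext : ∃ c : EV k s → ℕ, IsProperKColoring (Fenc k s) k c ∧
        c (.inl 0) = f (.inl 0) ∧ c (.inl 1) = f (.inl 1) ∧ c (.inl 2) = f (.inl 2) ∧
        ∀ y : Yk k, c (.inr (.inl y)) = f (.inr (.inl y))) :
    f (.inl 1) ∈ ({1,2,3} : Set ℕ) ∧ f (.inl 2) ∈ ({1,2,3} : Set ℕ) := by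
  obtain ⟨c, hc, -, hcv, hcw, hcy⟩ := hext
  have hlow : ∀ a : Fin 3, a ≠ 0 → c (.inl a) ∈ ({1,2,3} : Set ℕ) := by
    intro a ha
    have hlt : c (.inl a) < 4 := hc.lt_of_forall_color_mem_nbhd fun j hj hjk =>
      ⟨.inr (.inl ⟨j, hj, hjk⟩), Fenc_adj_y ha _, (hcy _).trans (hfy _)⟩
    have hpos := (Finset.mem_Icc.mp (hc.1 (.inl a))).1
    simp only [Set.mem_insert_iff, Set.mem_singleton_iff]
    omega
  rw [← hcv, ← hcw]
  exact ⟨hlow 1 (by decide), hlow 2 (by decide)⟩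

/-- If a function `f` on `{u,v,w,y₄,…,y_k}` with `f(yᵢ) = i` extends to a
proper `k`-coloring of the gadget `F_{enc,s,k}(u,v,w;y₄,…,y_k)`, then
`f v, f w ∈ {1,2,3}`. -/
theorem Fenc_forces_vw_colors (k s : ℕ) (hk : 4 ≤ k) (hs : 4 ≤ s ∧ s ≤ k)
    (f : EV k s → ℕ)
    (hfu : f (.inl 0) ∈ Finset.Icc 1 k) (hfv : f (.inl 1) ∈ Finset.Icc 1 k)
    (hfw : f (.inl 2) ∈ Finset.Icc 1 k)
    (hfy : ∀ y : Yk k, f (.inr (.inl y)) = y.1)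
    (hext : ∃ c : EV k s → ℕ, IsProperKColoring (Fenc k s) k c ∧
        c (.inl 0) = f (.inl 0) ∧ c (.inl 1) = f (.inl 1) ∧ c (.inl 2) = f (.inl 2) ∧
        ∀ y : Yk k, c (.inr (.inl y)) = f (.inr (.inl y))) :
    f (.inl 1) ∈ ({1,2,3} : Set ℕ) ∧ f (.inl 2) ∈ ({1,2,3} : Set ℕ) :=
  Fenc_forces_vw_colors_general k s f hfy hext
end
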